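/- arXiv:0712.0031 — 4 statements merged into one kernel-verified Lean document; each statement's English description precedes it below -/
import Mathlib

section
/- Let G be a simple (2,2)-sparse graph with n vertices and exactly 2n−3 edges. Then G is a Laman graph if and only if for every edge ij of G, the contracted graph G/ij is a (2,2)-graph on n−1 vertices. -/
/-!
STATEMENT 5: contraction characterization of Laman graphs.
Let G be a simple (2,2)-sparse graph with n vertices and exactly 2n−3 edges.  Then G is
a Laman graph if and only if for every edge ij of G, the contracted graph G/ij is a
(2,2)-graph on n−1 vertices.
-/

/-- A multigraph: finitely many edges, each with an ordered pair of distinct endpoints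
(parallel edges allowed, no loops). -/
structure MGraph (V E : Type) where
  ends : E → V × V
  ne : ∀ e, (ends e).1 ≠ (ends e).2

namespace MGraph

variable {V E : Type}

noncomputable def edgeCount (G : MGraph V E) (S : Finset V) : ℕ :=
  Nat.card {e : E // (G.ends e).1 ∈ S ∧ (G.ends e).2 ∈ S}

def IsSimple (G : MGraph V E) : Prop :=
  Function.Injective fun e => s((G.ends e).1, (G.ends e).2)

/-- `(2,2)`-sparsity: every subset of `n'` vertices induces at most `2n' − 2` edges. -/
def IsSparse22 (G : MGraph V E) : Prop :=
  ∀ S : Finset V, G.edgeCount S ≤ 2 * S.card - 2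

/-- A `(2,2)`-graph: `(2,2)`-sparse with exactly `2n − 2` edges. -/
def Is22Graph (G : MGraph V E) : Prop :=
  G.IsSparse22 ∧ Nat.card E = 2 * Nat.card V - 2

/-- A Laman graph: simple, `2n - 3` edges, every `n' ≥ 2` vertices induce `≤ 2n' - 3`
edges. -/
def IsLaman (G : MGraph V E) : Prop :=
  G.IsSimple ∧ Nat.card E = 2 * Nat.card V - 3 ∧
    ∀ S : Finset V, 2 ≤ S.card → G.edgeCount S ≤ 2 * S.card - 3

variable [DecidableEq V]

/-- The vertex map of the contraction over the edge `e0`: the discarded endpoint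
`(G.ends e0).2` is sent to the kept endpoint `(G.ends e0).1`. -/
def cmap (G : MGraph V E) (e0 : E) (v : V) : V :=
  if v = (G.ends e0).2 then (G.ends e0).1 else v

theorem cmap_ne (G : MGraph V E) (e0 : E) (v : V) : G.cmap e0 v ≠ (G.ends e0).2 := by
  unfold cmap; split
  · exact G.ne e0
  · assumption

theorem cmap_inj (G : MGraph V E) (e0 : E) (e : E)
    (he : s((G.ends e).1, (G.ends e).2) ≠ s((G.ends e0).1, (G.ends e0).2)) :
    G.cmap e0 (G.ends e).1 ≠ G.cmap e0 (G.ends e).2 := by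
  intro h
  unfold cmap at h
  by_cases h1 : (G.ends e).1 = (G.ends e0).2 <;>
    by_cases h2 : (G.ends e).2 = (G.ends e0).2
  · exact G.ne e (h1.trans h2.symm)
  · rw [if_pos h1, if_neg h2] at h
    exact he (Sym2.eq_iff.mpr (Or.inr ⟨h1, h.symm⟩))
  · rw [if_neg h1, if_pos h2] at h
    exact he (Sym2.eq_iff.mpr (Or.inl ⟨h, h2⟩))
  · rw [if_neg h1, if_neg h2] at h
    exact G.ne e h

/-- The contraction `G/e0`: vertex `(G.ends e0).2` is discarded and identified with
`(G.ends e0).1`; all edges between the two endpoints of `e0` are discarded (so no loops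
are created), and all other edges are retained (so parallel edges can be created). -/
def contract (G : MGraph V E) (e0 : E) :
    MGraph {v : V // v ≠ (G.ends e0).2}
      {e : E // s((G.ends e).1, (G.ends e).2) ≠ s((G.ends e0).1, (G.ends e0).2)} where
  ends e := (⟨G.cmap e0 (G.ends e.1).1, G.cmap_ne e0 _⟩,
             ⟨G.cmap e0 (G.ends e.1).2, G.cmap_ne e0 _⟩)
  ne e h := G.cmap_inj e0 e.1 e.2 (congrArg Subtype.val h)

end MGraph

section Aux

variable {V E : Type} [DecidableEq V]

theorem card_contract_verts [Fintype V] (G : MGraph V E) (e0 : E) :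
    Nat.card {v : V // v ≠ (G.ends e0).2} = Nat.card V - 1 := by
  classical
  simp only [Nat.card_eq_fintype_card]
  rw [Fintype.card_subtype_compl, Fintype.card_subtype_eq]

theorem card_contract_edges [Fintype E] (G : MGraph V E) (hs : G.IsSimple) (e0 : E) :
    Nat.card {e : E // s((G.ends e).1, (G.ends e).2) ≠ s((G.ends e0).1, (G.ends e0).2)} =
      Nat.card E - 1 := by
  classical
  simp only [Nat.card_eq_fintype_card]
  rw [Fintype.card_subtype_compl]
  congr 1
  rw [Fintype.card_eq_one_iff]
  exact ⟨⟨e0, rfl⟩, fun y => Subtype.ext (hs y.2)⟩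

end Aux

/-- **Contraction characterization of Laman graphs.** -/
theorem laman_iff_contractions_are_22
    {V E : Type} [Fintype V] [Fintype E] [DecidableEq V] (G : MGraph V E)
    (hsimple : G.IsSimple) (hsparse : G.IsSparse22)
    (hm : Nat.card E = 2 * Nat.card V - 3) :
    G.IsLaman ↔ ∀ e0 : E, (G.contract e0).Is22Graph := by
  classical
  constructor
  · rintro ⟨-, -, hlam⟩ e0
    have hab : (G.ends e0).1 ≠ (G.ends e0).2 := G.ne e0
    constructor
    · -- sparsity of the contraction
      intro S'
      set T0 : Finset V := S'.image Subtype.val with hT0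
      have hbT0 : (G.ends e0).2 ∉ T0 := by
        simp only [hT0, Finset.mem_image]
        rintro ⟨⟨v, hv⟩, -, rfl⟩
        exact hv rfl
      by_cases haT : (G.ends e0).1 ∈ T0
      · -- case a ∈ T0
        set T : Finset V := insert (G.ends e0).2 T0 with hT
        have hcardT : T.card = S'.card + 1 := by
          rw [hT, Finset.card_insert_of_notMem hbT0,
            Finset.card_image_of_injective _ Subtype.val_injective]
        have h2T : 2 ≤ T.card := by
          refine Finset.one_lt_card.mpr ⟨(G.ends e0).1, ?_, (G.ends e0).2, ?_, hab⟩
          · exact Finset.mem_insert_of_mem haT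
          · exact Finset.mem_insert_self _ _
        have hmem : ∀ (x : {e : {e : E // s((G.ends e).1, (G.ends e).2) ≠
              s((G.ends e0).1, (G.ends e0).2)} //
              ((G.contract e0).ends e).1 ∈ S' ∧ ((G.contract e0).ends e).2 ∈ S'}),
            (G.ends x.1.1).1 ∈ T ∧ (G.ends x.1.1).2 ∈ T := by
          rintro ⟨⟨e, he⟩, h1, h2⟩
          constructor
          · by_cases hv : (G.ends e).1 = (G.ends e0).2
            · rw [hv]; exact Finset.mem_insert_self _ _
            · have h1' : G.cmap e0 (G.ends e).1 ∈ T0 :=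
                Finset.mem_image_of_mem _ h1
              rw [MGraph.cmap, if_neg hv] at h1'
              exact Finset.mem_insert_of_mem h1'
          · by_cases hv : (G.ends e).2 = (G.ends e0).2
            · rw [hv]; exact Finset.mem_insert_self _ _
            · have h2' : G.cmap e0 (G.ends e).2 ∈ T0 :=
                Finset.mem_image_of_mem _ h2
              rw [MGraph.cmap, if_neg hv] at h2'
              exact Finset.mem_insert_of_mem h2'
        have hstep : (G.contract e0).edgeCount S' < G.edgeCount T := by
          unfold MGraph.edgeCount
          simp only [Nat.card_eq_fintype_card]
          refine Fintype.card_lt_of_injective_of_notMem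
            (fun x => ⟨x.1.1, hmem x⟩) ?_
            (b := ⟨e0, Finset.mem_insert_of_mem haT, Finset.mem_insert_self _ _⟩) ?_
          · intro x y hxy
            simp only [Subtype.mk.injEq] at hxy
            exact Subtype.ext (Subtype.ext hxy)
          · rintro ⟨x, hx⟩
            simp only [Subtype.mk.injEq] at hx
            exact x.1.2 (congrArg (fun e => s((G.ends e).1, (G.ends e).2)) hx)
        have hlT := hlam T h2T
        have hcS' : T0.card = S'.card :=
          Finset.card_image_of_injective _ Subtype.val_injective
        omega
      · -- case a ∉ T0
        have hmem : ∀ (x : {e : {e : E // s((G.ends e).1, (G.ends e).2) ≠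
              s((G.ends e0).1, (G.ends e0).2)} //
              ((G.contract e0).ends e).1 ∈ S' ∧ ((G.contract e0).ends e).2 ∈ S'}),
            (G.ends x.1.1).1 ∈ T0 ∧ (G.ends x.1.1).2 ∈ T0 := by
          rintro ⟨⟨e, he⟩, h1, h2⟩
          have h1' : G.cmap e0 (G.ends e).1 ∈ T0 := Finset.mem_image_of_mem _ h1
          have h2' : G.cmap e0 (G.ends e).2 ∈ T0 := Finset.mem_image_of_mem _ h2
          constructor
          · by_cases hv : (G.ends e).1 = (G.ends e0).2
            · rw [MGraph.cmap, if_pos hv] at h1'; exact absurd h1' haT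
            · rwa [MGraph.cmap, if_neg hv] at h1'
          · by_cases hv : (G.ends e).2 = (G.ends e0).2
            · rw [MGraph.cmap, if_pos hv] at h2'; exact absurd h2' haT
            · rwa [MGraph.cmap, if_neg hv] at h2'
        have hstep : (G.contract e0).edgeCount S' ≤ G.edgeCount T0 := by
          unfold MGraph.edgeCount
          refine Nat.card_le_card_of_injective (fun x => ⟨x.1.1, hmem x⟩) ?_
          intro x y hxy
          simp only [Subtype.mk.injEq] at hxy
          exact Subtype.ext (Subtype.ext hxy)
        have hs' := hsparse T0
        have hc : T0.card = S'.card :=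
          Finset.card_image_of_injective _ Subtype.val_injective
        omega
    · -- edge count of the contraction
      have hne : Nonempty E := ⟨e0⟩
      have hn : 2 ≤ Nat.card V := by
        have hpos : 0 < Nat.card E := Nat.card_pos
        omega
      rw [card_contract_verts, card_contract_edges G hsimple]
      omega
  · intro h
    refine ⟨hsimple, hm, ?_⟩
    intro S hS
    by_cases hex : ∃ e : E, (G.ends e).1 ∈ S ∧ (G.ends e).2 ∈ S
    · obtain ⟨e0, ha, hb⟩ := hex
      set S' : Finset {v : V // v ≠ (G.ends e0).2} :=
        S.subtype (fun v => v ≠ (G.ends e0).2) with hS'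
      have hcS' : S'.card = S.card - 1 := by
        rw [hS', Finset.card_subtype, Finset.filter_ne' S (G.ends e0).2,
          Finset.card_erase_of_mem hb]
      have hmem : ∀ (e : E), e ≠ e0 →
          s((G.ends e).1, (G.ends e).2) ≠ s((G.ends e0).1, (G.ends e0).2) := by
        intro e hne hcon
        exact hne (hsimple hcon)
      have hmem2 : ∀ (v : V), v ∈ S → ∀ (hv : G.cmap e0 v ≠ (G.ends e0).2),
          (⟨G.cmap e0 v, hv⟩ : {v : V // v ≠ (G.ends e0).2}) ∈ S' := by
        intro v hvS hv
        rw [hS', Finset.mem_subtype]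
        by_cases hvb : v = (G.ends e0).2
        · show G.cmap e0 v ∈ S
          unfold MGraph.cmap
          rw [if_pos hvb]; exact ha
        · show G.cmap e0 v ∈ S
          unfold MGraph.cmap
          rw [if_neg hvb]; exact hvS
      have hstep : G.edgeCount S ≤ (G.contract e0).edgeCount S' + 1 := by
        unfold MGraph.edgeCount
        have key : Nat.card {e : E // (G.ends e).1 ∈ S ∧ (G.ends e).2 ∈ S} ≤
            Nat.card (Option {e : {e : E // s((G.ends e).1, (G.ends e).2) ≠
              s((G.ends e0).1, (G.ends e0).2)} //
              ((G.contract e0).ends e).1 ∈ S' ∧ ((G.contract e0).ends e).2 ∈ S'}) := by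
          refine Nat.card_le_card_of_injective
            (fun x => if hx : x.1 = e0 then none else
              some ⟨⟨x.1, hmem x.1 hx⟩,
                hmem2 _ x.2.1 _, hmem2 _ x.2.2 _⟩) ?_
          intro x y hxy
          by_cases hx : x.1 = e0 <;> by_cases hy : y.1 = e0
          · exact Subtype.ext (hx.trans hy.symm)
          · simp only [dif_pos hx, dif_neg hy] at hxy
            exact absurd hxy (by simp)
          · simp only [dif_neg hx, dif_pos hy] at hxy
            exact absurd hxy (by simp)
          · simp only [dif_neg hx, dif_neg hy, Option.some.injEq,
              Subtype.mk.injEq] at hxy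
            exact Subtype.ext hxy
        rwa [Finite.card_option] at key
      have hsp := (h e0).1 S'
      omega
    · have hE : IsEmpty {e : E // (G.ends e).1 ∈ S ∧ (G.ends e).2 ∈ S} := by
        push_neg at hex
        exact ⟨fun x => hex x.1 x.2.1 x.2.2⟩
      unfold MGraph.edgeCount
      rw [Nat.card_of_isEmpty]
      omega
end

section
/- Let G be a looped-(2,2) graph. Then G is looped-Laman if and only if for every edge ij of G there exists a loop l (depending on ij) such that the graph obtained from the contraction G/ij by removing the loop l is a looped-(2,2) graph. -/
/-!
STATEMENT 6: contraction characterization of looped-Laman graphs.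
Let G be a looped-(2,2) graph.  Then G is looped-Laman if and only if for every edge ij
of G there exists a loop l (depending on ij) such that the graph obtained from the
contraction G/ij by removing the loop l is a looped-(2,2) graph.
-/

/-- A looped graph. -/
structure LGraph (V E L : Type) where
  ends : E → V × V
  ne : ∀ e, (ends e).1 ≠ (ends e).2
  loopAt : L → V

namespace LGraph

variable {V E L : Type}

noncomputable def edgeCount (G : LGraph V E L) (S : Finset V) : ℕ :=
  Nat.card {e : E // (G.ends e).1 ∈ S ∧ (G.ends e).2 ∈ S}

noncomputable def loopCount (G : LGraph V E L) (S : Finset V) : ℕ :=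
  Nat.card {l : L // G.loopAt l ∈ S}

/-- `(2,0,2)`-graded-sparsity: every subset of `n'` vertices induces at most `2n' − 2`
edges (loops not counted) and at most `2n'` edges plus loops. -/
def IsGradedSparse202 (G : LGraph V E L) : Prop :=
  (∀ S : Finset V, G.edgeCount S ≤ 2 * S.card - 2) ∧
  (∀ S : Finset V, G.edgeCount S + G.loopCount S ≤ 2 * S.card)

/-- A looped-(2,2) graph: `(2,0,2)`-graded-sparse with `m + c = 2n`. -/
def IsLooped22 (G : LGraph V E L) : Prop :=
  G.IsGradedSparse202 ∧ Nat.card E + Nat.card L = 2 * Nat.card V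

/-- A looped-Laman graph. -/
def IsLoopedLaman (G : LGraph V E L) : Prop :=
  (∀ S : Finset V, 2 ≤ S.card → G.edgeCount S ≤ 2 * S.card - 3) ∧
  (∀ S : Finset V, G.edgeCount S + G.loopCount S ≤ 2 * S.card) ∧
  Nat.card E + Nat.card L = 2 * Nat.card V

variable [DecidableEq V]

/-- The vertex map of the contraction over the edge `e0`. -/
def cmap (G : LGraph V E L) (e0 : E) (v : V) : V :=
  if v = (G.ends e0).2 then (G.ends e0).1 else v

theorem cmap_ne (G : LGraph V E L) (e0 : E) (v : V) : G.cmap e0 v ≠ (G.ends e0).2 := by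
  unfold cmap; split
  · exact G.ne e0
  · assumption

theorem cmap_inj (G : LGraph V E L) (e0 : E) (e : E)
    (he : s((G.ends e).1, (G.ends e).2) ≠ s((G.ends e0).1, (G.ends e0).2)) :
    G.cmap e0 (G.ends e).1 ≠ G.cmap e0 (G.ends e).2 := by
  intro h
  unfold cmap at h
  by_cases h1 : (G.ends e).1 = (G.ends e0).2 <;>
    by_cases h2 : (G.ends e).2 = (G.ends e0).2
  · exact G.ne e (h1.trans h2.symm)
  · rw [if_pos h1, if_neg h2] at h
    exact he (Sym2.eq_iff.mpr (Or.inr ⟨h1, h.symm⟩))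
  · rw [if_neg h1, if_pos h2] at h
    exact he (Sym2.eq_iff.mpr (Or.inl ⟨h, h2⟩))
  · rw [if_neg h1, if_neg h2] at h
    exact G.ne e h

/-- The contraction `G/e0`: vertex `(G.ends e0).2` is discarded and identified with
`(G.ends e0).1`; all edges between the two endpoints of `e0` are discarded (loops
created by the contraction are discarded), other edges are retained, and each loop on
the discarded vertex becomes a loop on the kept vertex. -/
def contract (G : LGraph V E L) (e0 : E) :
    LGraph {v : V // v ≠ (G.ends e0).2}
      {e : E // s((G.ends e).1, (G.ends e).2) ≠ s((G.ends e0).1, (G.ends e0).2)} L where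
  ends e := (⟨G.cmap e0 (G.ends e.1).1, G.cmap_ne e0 _⟩,
             ⟨G.cmap e0 (G.ends e.1).2, G.cmap_ne e0 _⟩)
  ne e h := G.cmap_inj e0 e.1 e.2 (congrArg Subtype.val h)
  loopAt l := ⟨G.cmap e0 (G.loopAt l), G.cmap_ne e0 _⟩

/-- Removal of the loop `l0` from `G`. -/
def removeLoop (G : LGraph V E L) [DecidableEq L] (l0 : L) :
    LGraph V E {l : L // l ≠ l0} where
  ends := G.ends
  ne := G.ne
  loopAt l := G.loopAt l.1

end LGraph

section Helpers
set_option linter.unusedSectionVars false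

namespace LGraph

open Finset
open scoped Classical

variable {V E L : Type} [Fintype V] [Fintype E] [Fintype L] [DecidableEq V] [DecidableEq L]

lemma edgeCount_eq_card_filter (G : LGraph V E L) (S : Finset V) :
    G.edgeCount S
      = (Finset.univ.filter (fun e : E => (G.ends e).1 ∈ S ∧ (G.ends e).2 ∈ S)).card := by
  rw [edgeCount, Nat.card_eq_fintype_card, Fintype.card_subtype]

lemma loopCount_eq_card_filter (G : LGraph V E L) (S : Finset V) :
    G.loopCount S = (Finset.univ.filter (fun l : L => G.loopAt l ∈ S)).card := by
  rw [loopCount, Nat.card_eq_fintype_card, Fintype.card_subtype]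

/-- Supermodularity of the edge count. -/
lemma edge_supermod (G : LGraph V E L) (S T : Finset V) :
    G.edgeCount S + G.edgeCount T
      ≤ G.edgeCount (S ∪ T) + G.edgeCount (S ∩ T) := by
  classical
  simp only [edgeCount_eq_card_filter]
  have h1 : (Finset.univ.filter (fun e : E => (G.ends e).1 ∈ S ∧ (G.ends e).2 ∈ S))
      ∪ (Finset.univ.filter (fun e : E => (G.ends e).1 ∈ T ∧ (G.ends e).2 ∈ T))
      ⊆ Finset.univ.filter (fun e : E => (G.ends e).1 ∈ S ∪ T ∧ (G.ends e).2 ∈ S ∪ T) := by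
    intro e he
    simp only [Finset.mem_union, Finset.mem_filter, Finset.mem_univ, true_and] at he ⊢
    rcases he with ⟨h1, h2⟩ | ⟨h1, h2⟩ <;> simp [h1, h2]
  have h2 : (Finset.univ.filter (fun e : E => (G.ends e).1 ∈ S ∧ (G.ends e).2 ∈ S))
      ∩ (Finset.univ.filter (fun e : E => (G.ends e).1 ∈ T ∧ (G.ends e).2 ∈ T))
      = Finset.univ.filter (fun e : E => (G.ends e).1 ∈ S ∩ T ∧ (G.ends e).2 ∈ S ∩ T) := by
    ext e
    simp only [Finset.mem_inter, Finset.mem_filter, Finset.mem_univ, true_and]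
    tauto
  have h3 := Finset.card_union_add_card_inter
    (Finset.univ.filter (fun e : E => (G.ends e).1 ∈ S ∧ (G.ends e).2 ∈ S))
    (Finset.univ.filter (fun e : E => (G.ends e).1 ∈ T ∧ (G.ends e).2 ∈ T))
  have h4 := Finset.card_le_card h1
  rw [h2] at h3
  omega

/-- Modularity of the loop count. -/
lemma loop_mod (G : LGraph V E L) (S T : Finset V) :
    G.loopCount S + G.loopCount T
      = G.loopCount (S ∪ T) + G.loopCount (S ∩ T) := by
  classical
  simp only [loopCount_eq_card_filter]
  have h1 : (Finset.univ.filter (fun l : L => G.loopAt l ∈ S))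
      ∪ (Finset.univ.filter (fun l : L => G.loopAt l ∈ T))
      = Finset.univ.filter (fun l : L => G.loopAt l ∈ S ∪ T) := by
    ext l; simp [Finset.mem_union]
  have h2 : (Finset.univ.filter (fun l : L => G.loopAt l ∈ S))
      ∩ (Finset.univ.filter (fun l : L => G.loopAt l ∈ T))
      = Finset.univ.filter (fun l : L => G.loopAt l ∈ S ∩ T) := by
    ext l; simp [Finset.mem_inter]
  have h3 := Finset.card_union_add_card_inter
    (Finset.univ.filter (fun l : L => G.loopAt l ∈ S))
    (Finset.univ.filter (fun l : L => G.loopAt l ∈ T))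
  rw [h1, h2] at h3
  omega

lemma edgeCount_univ (G : LGraph V E L) :
    G.edgeCount Finset.univ = Nat.card E := by
  rw [edgeCount]
  exact Nat.card_congr (Equiv.subtypeUnivEquiv (fun e => ⟨Finset.mem_univ _, Finset.mem_univ _⟩))

lemma loopCount_univ (G : LGraph V E L) :
    G.loopCount Finset.univ = Nat.card L := by
  rw [loopCount]
  exact Nat.card_congr (Equiv.subtypeUnivEquiv (fun l => Finset.mem_univ _))

end LGraph

end Helpers

section Helpers2
set_option linter.unusedSectionVars false
namespace LGraph

open Finset
open scoped Classical

variable {V E L : Type} [Fintype V] [Fintype E] [Fintype L] [DecidableEq V] [DecidableEq L]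

/-- The subset of `V` corresponding to a subset `S'` of the contracted vertex set. -/
def hat (G : LGraph V E L) (e0 : E) (S' : Finset {v : V // v ≠ (G.ends e0).2}) : Finset V :=
  if (G.ends e0).1 ∈ S'.image Subtype.val then
    insert (G.ends e0).2 (S'.image Subtype.val)
  else S'.image Subtype.val

lemma b_notMem_img (G : LGraph V E L) (e0 : E) (S' : Finset {v : V // v ≠ (G.ends e0).2}) :
    (G.ends e0).2 ∉ S'.image Subtype.val := by
  intro h
  obtain ⟨x, _, hx⟩ := Finset.mem_image.mp h
  exact x.2 hx

lemma mem_img_iff (G : LGraph V E L) (e0 : E) (S' : Finset {v : V // v ≠ (G.ends e0).2})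
    (u : V) (hu : u ≠ (G.ends e0).2) :
    u ∈ S'.image Subtype.val ↔ (⟨u, hu⟩ : {v : V // v ≠ (G.ends e0).2}) ∈ S' := by
  rw [Finset.mem_image]
  constructor
  · rintro ⟨x, hx, rfl⟩; exact hx
  · intro hx; exact ⟨⟨u, hu⟩, hx, rfl⟩

lemma mem_hat_iff (G : LGraph V E L) (e0 : E) (S' : Finset {v : V // v ≠ (G.ends e0).2})
    (u : V) :
    (⟨G.cmap e0 u, G.cmap_ne e0 u⟩ : {v : V // v ≠ (G.ends e0).2}) ∈ S'
      ↔ u ∈ G.hat e0 S' := by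
  rw [← mem_img_iff G e0 S' _ (G.cmap_ne e0 u)]
  by_cases hu : u = (G.ends e0).2
  · have hc : G.cmap e0 u = (G.ends e0).1 := by unfold cmap; simp [hu]
    rw [hc]
    subst hu
    unfold hat
    by_cases ha : (G.ends e0).1 ∈ S'.image Subtype.val
    · simp [if_pos ha, ha]
    · simp [if_neg ha, ha, G.b_notMem_img e0 S']
  · have hc : G.cmap e0 u = u := by unfold cmap; simp [hu]
    rw [hc]
    unfold hat
    by_cases ha : (G.ends e0).1 ∈ S'.image Subtype.val
    · rw [if_pos ha, Finset.mem_insert]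
      refine ⟨fun h => Or.inr h, ?_⟩
      rintro (h | h)
      · exact absurd h hu
      · exact h
    · rw [if_neg ha]

lemma card_hat (G : LGraph V E L) (e0 : E) (S' : Finset {v : V // v ≠ (G.ends e0).2}) :
    (G.hat e0 S').card
      = S'.card + (if (G.ends e0).1 ∈ S'.image Subtype.val then 1 else 0) := by
  have himg : (S'.image Subtype.val).card = S'.card :=
    Finset.card_image_of_injective _ Subtype.val_injective
  unfold hat
  by_cases ha : (G.ends e0).1 ∈ S'.image Subtype.val
  · rw [if_pos ha, if_pos ha, Finset.card_insert_of_notMem (G.b_notMem_img e0 S'), himg]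
  · rw [if_neg ha, if_neg ha, himg]; omega

lemma a_mem_hat (G : LGraph V E L) (e0 : E) (S' : Finset {v : V // v ≠ (G.ends e0).2})
    (ha : (G.ends e0).1 ∈ S'.image Subtype.val) : (G.ends e0).1 ∈ G.hat e0 S' := by
  unfold hat; rw [if_pos ha]; exact Finset.mem_insert_of_mem ha

lemma b_mem_hat (G : LGraph V E L) (e0 : E) (S' : Finset {v : V // v ≠ (G.ends e0).2})
    (ha : (G.ends e0).1 ∈ S'.image Subtype.val) : (G.ends e0).2 ∈ G.hat e0 S' := by
  unfold hat; rw [if_pos ha]; exact Finset.mem_insert_self _ _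

lemma b_mem_hat_iff (G : LGraph V E L) (e0 : E) (S' : Finset {v : V // v ≠ (G.ends e0).2}) :
    (G.ends e0).2 ∈ G.hat e0 S' ↔ (G.ends e0).1 ∈ S'.image Subtype.val := by
  constructor
  · intro hb
    by_contra ha
    unfold hat at hb
    rw [if_neg ha] at hb
    exact G.b_notMem_img e0 S' hb
  · exact G.b_mem_hat e0 S'

end LGraph
end Helpers2

section Helpers3
set_option linter.unusedSectionVars false
set_option maxHeartbeats 1000000
namespace LGraph

open Finset
open scoped Classical

variable {V E L : Type} [Fintype V] [Fintype E] [Fintype L] [DecidableEq V] [DecidableEq L]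

/-- The parallel class of `e0`. -/
def IsPar (G : LGraph V E L) (e0 e : E) : Prop :=
  s((G.ends e).1, (G.ends e).2) = s((G.ends e0).1, (G.ends e0).2)

lemma edgeCount_contract (G : LGraph V E L) (e0 : E) (l0 : L)
    (S' : Finset {v : V // v ≠ (G.ends e0).2}) :
    G.edgeCount (G.hat e0 S')
      = ((G.contract e0).removeLoop l0).edgeCount S'
        + (if (G.ends e0).1 ∈ S'.image Subtype.val
            then Nat.card {e : E // G.IsPar e0 e} else 0) := by
  classical
  have h1 : ((G.contract e0).removeLoop l0).edgeCount S'
      = Nat.card {e : E // ¬ G.IsPar e0 e ∧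
          ((G.ends e).1 ∈ G.hat e0 S' ∧ (G.ends e).2 ∈ G.hat e0 S')} := by
    rw [edgeCount]
    refine Nat.card_congr
      ⟨fun x => ⟨x.1.1, x.1.2, (G.mem_hat_iff e0 S' _).mp x.2.1,
          (G.mem_hat_iff e0 S' _).mp x.2.2⟩,
       fun x => ⟨⟨x.1, x.2.1⟩, (G.mem_hat_iff e0 S' _).mpr x.2.2.1,
          (G.mem_hat_iff e0 S' _).mpr x.2.2.2⟩,
       fun x => rfl, fun x => rfl⟩
  have h2 : Nat.card {e : E // ¬ G.IsPar e0 e ∧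
        ((G.ends e).1 ∈ G.hat e0 S' ∧ (G.ends e).2 ∈ G.hat e0 S')}
      = (Finset.univ.filter (fun e : E => ¬ G.IsPar e0 e ∧
          ((G.ends e).1 ∈ G.hat e0 S' ∧ (G.ends e).2 ∈ G.hat e0 S'))).card := by
    rw [Nat.card_eq_fintype_card, Fintype.card_subtype]
  have hsplit := Finset.card_filter_add_card_filter_not
      (s := Finset.univ.filter (fun e : E =>
        (G.ends e).1 ∈ G.hat e0 S' ∧ (G.ends e).2 ∈ G.hat e0 S'))
      (p := fun e : E => G.IsPar e0 e)
  rw [Finset.filter_filter, Finset.filter_filter] at hsplit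
  have heq1 : (Finset.univ.filter (fun e : E =>
        ((G.ends e).1 ∈ G.hat e0 S' ∧ (G.ends e).2 ∈ G.hat e0 S') ∧ ¬ G.IsPar e0 e)).card
      = (Finset.univ.filter (fun e : E => ¬ G.IsPar e0 e ∧
          ((G.ends e).1 ∈ G.hat e0 S' ∧ (G.ends e).2 ∈ G.hat e0 S'))).card := by
    congr 1
    apply Finset.filter_congr
    intro e _
    constructor <;> (intro h; tauto)
  have heq2 : (Finset.univ.filter (fun e : E =>
        ((G.ends e).1 ∈ G.hat e0 S' ∧ (G.ends e).2 ∈ G.hat e0 S') ∧ G.IsPar e0 e)).card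
      = (if (G.ends e0).1 ∈ S'.image Subtype.val
          then Nat.card {e : E // G.IsPar e0 e} else 0) := by
    by_cases ha : (G.ends e0).1 ∈ S'.image Subtype.val
    · rw [if_pos ha, Nat.card_eq_fintype_card, Fintype.card_subtype]
      congr 1
      apply Finset.filter_congr
      intro e _
      simp only [and_iff_right_iff_imp]
      intro hp
      rcases Sym2.eq_iff.mp hp with ⟨h1, h2⟩ | ⟨h1, h2⟩
      · rw [h1, h2]; exact ⟨G.a_mem_hat e0 S' ha, G.b_mem_hat e0 S' ha⟩
      · rw [h1, h2]; exact ⟨G.b_mem_hat e0 S' ha, G.a_mem_hat e0 S' ha⟩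
    · rw [if_neg ha]
      rw [Finset.card_eq_zero, Finset.filter_eq_empty_iff]
      intro e _
      rintro ⟨⟨hm1, hm2⟩, hp⟩
      rcases Sym2.eq_iff.mp hp with ⟨h1, h2⟩ | ⟨h1, h2⟩
      · rw [h2] at hm2
        exact ha ((G.b_mem_hat_iff e0 S').mp hm2)
      · rw [h1] at hm1
        exact ha ((G.b_mem_hat_iff e0 S').mp hm1)
  rw [h1, h2, edgeCount_eq_card_filter, ← hsplit, heq1, heq2]
  omega

lemma loopCount_contract (G : LGraph V E L) (e0 : E) (l0 : L)
    (S' : Finset {v : V // v ≠ (G.ends e0).2}) :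
    G.loopCount (G.hat e0 S')
      = ((G.contract e0).removeLoop l0).loopCount S'
        + (if G.loopAt l0 ∈ G.hat e0 S' then 1 else 0) := by
  classical
  have h1 : ((G.contract e0).removeLoop l0).loopCount S'
      = Nat.card {l : L // l ≠ l0 ∧ G.loopAt l ∈ G.hat e0 S'} := by
    rw [loopCount]
    refine Nat.card_congr
      ⟨fun x => ⟨x.1.1, x.1.2, (G.mem_hat_iff e0 S' _).mp x.2⟩,
       fun x => ⟨⟨x.1, x.2.1⟩, (G.mem_hat_iff e0 S' _).mpr x.2.2⟩,
       fun x => rfl, fun x => rfl⟩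
  have h2 : Nat.card {l : L // l ≠ l0 ∧ G.loopAt l ∈ G.hat e0 S'}
      = (Finset.univ.filter (fun l : L => l ≠ l0 ∧ G.loopAt l ∈ G.hat e0 S')).card := by
    rw [Nat.card_eq_fintype_card, Fintype.card_subtype]
  have hsplit := Finset.card_filter_add_card_filter_not
      (s := Finset.univ.filter (fun l : L => G.loopAt l ∈ G.hat e0 S'))
      (p := fun l : L => l = l0)
  rw [Finset.filter_filter, Finset.filter_filter] at hsplit
  have heq1 : (Finset.univ.filter (fun l : L =>
        G.loopAt l ∈ G.hat e0 S' ∧ ¬ l = l0)).card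
      = (Finset.univ.filter (fun l : L => l ≠ l0 ∧ G.loopAt l ∈ G.hat e0 S')).card := by
    congr 1
    apply Finset.filter_congr
    intro l _
    constructor <;> (intro h; tauto)
  have heq2 : (Finset.univ.filter (fun l : L =>
        G.loopAt l ∈ G.hat e0 S' ∧ l = l0)).card
      = (if G.loopAt l0 ∈ G.hat e0 S' then 1 else 0) := by
    by_cases hb : G.loopAt l0 ∈ G.hat e0 S'
    · rw [if_pos hb]
      have : Finset.univ.filter (fun l : L => G.loopAt l ∈ G.hat e0 S' ∧ l = l0) = {l0} := by
        ext l
        simp only [Finset.mem_filter, Finset.mem_univ, true_and, Finset.mem_singleton]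
        constructor
        · rintro ⟨_, rfl⟩; rfl
        · rintro rfl; exact ⟨hb, rfl⟩
      rw [this, Finset.card_singleton]
    · rw [if_neg hb, Finset.card_eq_zero, Finset.filter_eq_empty_iff]
      rintro l _ ⟨hm, rfl⟩
      exact hb hm
  rw [h1, h2, loopCount_eq_card_filter, ← hsplit, heq1, heq2]
  omega

lemma card_V_contract (G : LGraph V E L) (e0 : E) :
    Nat.card {v : V // v ≠ (G.ends e0).2} + 1 = Nat.card V := by
  rw [Nat.card_eq_fintype_card, Nat.card_eq_fintype_card, Fintype.card_subtype]
  have : Finset.univ.filter (fun v : V => v ≠ (G.ends e0).2)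
      = Finset.univ.erase (G.ends e0).2 := by
    ext v; simp [Finset.mem_erase, and_comm]
  rw [this, Finset.card_erase_of_mem (Finset.mem_univ _), Finset.card_univ]
  have : 1 ≤ Fintype.card V := Fintype.card_pos_iff.mpr ⟨(G.ends e0).2⟩
  omega

lemma card_E_contract (G : LGraph V E L) (e0 : E) :
    Nat.card {e : E // s((G.ends e).1, (G.ends e).2) ≠ s((G.ends e0).1, (G.ends e0).2)}
        + Nat.card {e : E // G.IsPar e0 e}
      = Nat.card E := by
  rw [Nat.card_eq_fintype_card, Nat.card_eq_fintype_card, Nat.card_eq_fintype_card,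
    Fintype.card_subtype, Fintype.card_subtype]
  have := Finset.card_filter_add_card_filter_not
      (s := (Finset.univ : Finset E)) (p := fun e : E => G.IsPar e0 e)
  rw [Finset.card_univ] at this
  have h0 : (Finset.univ.filter (fun e : E =>
        s((G.ends e).1, (G.ends e).2) ≠ s((G.ends e0).1, (G.ends e0).2))).card
      = (Finset.univ.filter (fun e : E => ¬ G.IsPar e0 e)).card := by
    congr 1
    apply Finset.filter_congr
    intro e _
    exact Iff.rfl
  omega

lemma card_L_remove (G : LGraph V E L) (l0 : L) :
    Nat.card {l : L // l ≠ l0} + 1 = Nat.card L := by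
  rw [Nat.card_eq_fintype_card, Nat.card_eq_fintype_card, Fintype.card_subtype]
  have : Finset.univ.filter (fun l : L => l ≠ l0) = Finset.univ.erase l0 := by
    ext l; simp [Finset.mem_erase, and_comm]
  rw [this, Finset.card_erase_of_mem (Finset.mem_univ _), Finset.card_univ]
  have : 1 ≤ Fintype.card L := Fintype.card_pos_iff.mpr ⟨l0⟩
  omega

lemma par_count_eq_edgeCount_pair (G : LGraph V E L) (e0 : E) :
    Nat.card {e : E // G.IsPar e0 e}
      = G.edgeCount {(G.ends e0).1, (G.ends e0).2} := by
  rw [edgeCount]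
  refine Nat.card_congr (Equiv.subtypeEquivRight ?_)
  intro e
  unfold IsPar
  rw [Sym2.eq_iff]
  constructor
  · rintro (⟨h1, h2⟩ | ⟨h1, h2⟩)
    · rw [h1, h2]
      exact ⟨Finset.mem_insert_self _ _,
        Finset.mem_insert_of_mem (Finset.mem_singleton_self _)⟩
    · rw [h1, h2]
      exact ⟨Finset.mem_insert_of_mem (Finset.mem_singleton_self _),
        Finset.mem_insert_self _ _⟩
  · rintro ⟨h1, h2⟩
    simp only [Finset.mem_insert, Finset.mem_singleton] at h1 h2
    have hne := G.ne e
    rcases h1 with h1 | h1 <;> rcases h2 with h2 | h2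
    · exact absurd (h1.trans h2.symm) hne
    · exact Or.inl ⟨h1, h2⟩
    · exact Or.inr ⟨h1, h2⟩
    · exact absurd (h1.trans h2.symm) hne

lemma one_le_par_count (G : LGraph V E L) (e0 : E) :
    1 ≤ Nat.card {e : E // G.IsPar e0 e} := by
  have : Nonempty {e : E // G.IsPar e0 e} := ⟨⟨e0, rfl⟩⟩
  have := Nat.card_pos_iff.mpr ⟨this, inferInstance⟩
  omega

end LGraph
end Helpers3

/-- **Contraction characterization of looped-Laman graphs.** -/
theorem loopedLaman_iff_contraction_minus_loop_is_looped22
    {V E L : Type} [Fintype V] [Fintype E] [Fintype L] [DecidableEq V] [DecidableEq L]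
    (G : LGraph V E L) (h : G.IsLooped22) :
    G.IsLoopedLaman ↔
      ∀ e0 : E, ∃ l0 : L, ((G.contract e0).removeLoop l0).IsLooped22 := by
  classical
  obtain ⟨⟨hs1, hs2⟩, hcount⟩ := h
  constructor
  · rintro ⟨hL1, hL2, hL3⟩ e0
    have hab : (G.ends e0).1 ≠ (G.ends e0).2 := G.ne e0
    -- the family of tight sets containing both endpoints of `e0`
    set Tight : Finset V → Prop := fun S =>
      (G.ends e0).1 ∈ S ∧ (G.ends e0).2 ∈ S ∧
        G.edgeCount S + G.loopCount S = 2 * S.card with hTdef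
    have htu : Tight Finset.univ := by
      refine ⟨Finset.mem_univ _, Finset.mem_univ _, ?_⟩
      rw [G.edgeCount_univ, G.loopCount_univ, Finset.card_univ, ← Nat.card_eq_fintype_card]
      exact hcount
    have hinter : ∀ S T, Tight S → Tight T → Tight (S ∩ T) := by
      rintro S T ⟨ha1, hb1, ht1⟩ ⟨ha2, hb2, ht2⟩
      refine ⟨Finset.mem_inter.mpr ⟨ha1, ha2⟩, Finset.mem_inter.mpr ⟨hb1, hb2⟩, ?_⟩
      have h4 := G.edge_supermod S T
      have h5 := G.loop_mod S T
      have h6 := hs2 (S ∪ T)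
      have h7 := hs2 (S ∩ T)
      have h8 := Finset.card_union_add_card_inter S T
      omega
    obtain ⟨T0, hT0mem, hT0min⟩ := Finset.exists_min_image
      (Finset.univ.filter Tight) Finset.card
      ⟨Finset.univ, Finset.mem_filter.mpr ⟨Finset.mem_univ _, htu⟩⟩
    have hT0 : Tight T0 := (Finset.mem_filter.mp hT0mem).2
    have hT0sub : ∀ S, Tight S → T0 ⊆ S := by
      intro S hS
      have h9 : Tight (T0 ∩ S) := hinter _ _ hT0 hS
      have h10 : T0.card ≤ (T0 ∩ S).card :=
        hT0min _ (Finset.mem_filter.mpr ⟨Finset.mem_univ _, h9⟩)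
      have h11 := Finset.eq_of_subset_of_card_le Finset.inter_subset_left h10
      intro x hx
      rw [← h11] at hx
      exact (Finset.mem_inter.mp hx).2
    have h2card : 2 ≤ T0.card := by
      have := Finset.one_lt_card.mpr ⟨_, hT0.1, _, hT0.2.1, hab⟩
      omega
    have hloops : 0 < G.loopCount T0 := by
      have h12 := hL1 T0 h2card
      have h13 := hT0.2.2
      omega
    obtain ⟨l0, hl0⟩ : ∃ l0 : L, G.loopAt l0 ∈ T0 := by
      rw [LGraph.loopCount] at hloops
      obtain ⟨⟨l0, hl⟩⟩ := (Nat.card_pos_iff.mp hloops).1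
      exact ⟨l0, hl⟩
    -- exactly one edge parallel to e0
    have hpairc : ({(G.ends e0).1, (G.ends e0).2} : Finset V).card = 2 := by
      rw [Finset.card_insert_of_notMem (by simp [hab]), Finset.card_singleton]
    have hpar1 : Nat.card {e : E // G.IsPar e0 e} = 1 := by
      have hle := hL1 {(G.ends e0).1, (G.ends e0).2} (le_of_eq hpairc.symm)
      rw [hpairc, ← G.par_count_eq_edgeCount_pair e0] at hle
      have := G.one_le_par_count e0
      omega
    refine ⟨l0, ⟨⟨?_, ?_⟩, ?_⟩⟩
    · intro S'
      have hec := G.edgeCount_contract e0 l0 S'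
      have hch := G.card_hat e0 S'
      by_cases ha : (G.ends e0).1 ∈ S'.image Subtype.val
      · rw [if_pos ha, hpar1] at hec
        rw [if_pos ha] at hch
        have hhat2 : 2 ≤ (G.hat e0 S').card := by
          have := Finset.one_lt_card.mpr
            ⟨_, G.a_mem_hat e0 S' ha, _, G.b_mem_hat e0 S' ha, hab⟩
          omega
        have h14 := hL1 _ hhat2
        omega
      · rw [if_neg ha] at hec
        rw [if_neg ha] at hch
        have h15 := hs1 (G.hat e0 S')
        omega
    · intro S'
      have hec := G.edgeCount_contract e0 l0 S'
      have hlc := G.loopCount_contract e0 l0 S'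
      have hch := G.card_hat e0 S'
      have hsp := hs2 (G.hat e0 S')
      by_cases ha : (G.ends e0).1 ∈ S'.image Subtype.val
      · rw [if_pos ha, hpar1] at hec
        rw [if_pos ha] at hch
        by_cases htight : G.edgeCount (G.hat e0 S') + G.loopCount (G.hat e0 S')
            = 2 * (G.hat e0 S').card
        · have hT : Tight (G.hat e0 S') :=
            ⟨G.a_mem_hat e0 S' ha, G.b_mem_hat e0 S' ha, htight⟩
          have hmem : G.loopAt l0 ∈ G.hat e0 S' := hT0sub _ hT hl0
          rw [if_pos hmem] at hlc
          omega
        · rcases em (G.loopAt l0 ∈ G.hat e0 S') with hm | hm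
          · rw [if_pos hm] at hlc; omega
          · rw [if_neg hm] at hlc; omega
      · rw [if_neg ha] at hec
        rw [if_neg ha] at hch
        rcases em (G.loopAt l0 ∈ G.hat e0 S') with hm | hm
        · rw [if_pos hm] at hlc; omega
        · rw [if_neg hm] at hlc; omega
    · have h1 := G.card_E_contract e0
      have h2 := G.card_L_remove l0
      have h3 := G.card_V_contract e0
      rw [hpar1] at h1
      omega
  · intro hc
    refine ⟨?_, hs2, hcount⟩
    intro S hS2
    by_contra hlt
    push_neg at hlt
    have hub := hs1 S
    have hpos : 0 < G.edgeCount S := by omega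
    obtain ⟨e0, he1, he2⟩ : ∃ e0 : E, (G.ends e0).1 ∈ S ∧ (G.ends e0).2 ∈ S := by
      rw [LGraph.edgeCount] at hpos
      obtain ⟨⟨e0, h1, h2⟩⟩ := (Nat.card_pos_iff.mp hpos).1
      exact ⟨e0, h1, h2⟩
    obtain ⟨l0, ⟨⟨hs1', _⟩, hcount'⟩⟩ := hc e0
    have h1 := G.card_E_contract e0
    have h2 := G.card_L_remove l0
    have h3 := G.card_V_contract e0
    have hpar1 : Nat.card {e : E // G.IsPar e0 e} = 1 := by omega
    set S' : Finset {v : V // v ≠ (G.ends e0).2} :=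
      Finset.univ.filter (fun v => v.1 ∈ S) with hS'def
    have himg : S'.image Subtype.val = S.erase (G.ends e0).2 := by
      ext u
      simp only [hS'def, Finset.mem_image, Finset.mem_filter, Finset.mem_univ, true_and,
        Finset.mem_erase]
      constructor
      · rintro ⟨x, hx, rfl⟩; exact ⟨x.2, hx⟩
      · rintro ⟨hu, huS⟩; exact ⟨⟨u, hu⟩, huS, rfl⟩
    have haimg : (G.ends e0).1 ∈ S'.image Subtype.val := by
      rw [himg]; exact Finset.mem_erase.mpr ⟨G.ne e0, he1⟩
    have hhat : G.hat e0 S' = S := by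
      unfold LGraph.hat; rw [if_pos haimg, himg, Finset.insert_erase he2]
    have hec := G.edgeCount_contract e0 l0 S'
    rw [if_pos haimg, hhat, hpar1] at hec
    have hch := G.card_hat e0 S'
    rw [if_pos haimg, hhat] at hch
    have hbound := hs1' S'
    omega
end

section
/- Let G be a looped graph with n vertices, m edges and c loops with m + c = n. If G is a looped forest, then det M_{1,0,1}(G) = ± (∏_{edges e} a_e) · (∏_{loops l} c_l); otherwise det M_{1,0,1}(G) = 0. -/
/-!
STATEMENT 8: determinant of the natural looped-forest matrix.
Let G be a looped graph with n vertices, m edges and c loops with m + c = n.  If G is a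
looped forest, then det M_{1,0,1}(G) = ± (∏_{edges e} a_e) · (∏_{loops l} c_l);
otherwise det M_{1,0,1}(G) = 0.
-/

open MvPolynomial

namespace LGraph

variable {V E L : Type}

/-- The simple graph on `V` underlying the edges of `G`. -/
def toSG (G : LGraph V E L) : SimpleGraph V :=
  SimpleGraph.fromRel fun u v => ∃ e, G.ends e = (u, v)

/-- `G` is a looped forest: its edges form a forest (no parallel edges and no cycles)
and each connected component contains exactly one loop. -/
def IsLoopedForest (G : LGraph V E L) : Prop :=
  (Function.Injective fun e => s((G.ends e).1, (G.ends e).2)) ∧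
  G.toSG.IsAcyclic ∧
  ∀ comp : G.toSG.ConnectedComponent,
    Nat.card {l : L // G.toSG.connectedComponentMk (G.loopAt l) = comp} = 1

/-- The matrix `M_{1,0,1}(G)` over `ℝ[a_e, c_l]` (variable `Sum.inl e` is `a_e`,
`Sum.inr l` is `c_l`): the row of edge `e = ij` has entry `a_e` in the column of `i`,
`−a_e` in the column of `j`, and zeros elsewhere; the row of the loop `l` on vertex `i`
has entry `c_l` in the column of `i` and zeros elsewhere. -/
noncomputable def M101 [DecidableEq V] (G : LGraph V E L) :
    Matrix (E ⊕ L) V (MvPolynomial (E ⊕ L) ℝ) := fun row v =>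
  match row with
  | Sum.inl e =>
      if v = (G.ends e).1 then X (Sum.inl e)
      else if v = (G.ends e).2 then -X (Sum.inl e) else 0
  | Sum.inr l => if v = G.loopAt l then X (Sum.inr l) else 0

end LGraph

/-!
Each nonzero term of the Leibniz expansion of the determinant matches the rows (edges and loops)
bijectively with the vertices, each row with a vertex it contains, and is `±∏ a_e ∏ c_l`.

If some component carries no loop, its indicator vector is in the kernel, so the determinant
vanishes. Otherwise root each component at one of its loops and send every other vertex to the
first edge of a shortest path to its root. This map from vertices to edges and components is
injective, so `m + c = n` makes it bijective: each component has exactly one loop, and each edge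
is the first edge from its endpoint farther from the root, which rules out parallel edges and
cycles. Inverting it matches every edge with its deeper endpoint. In any other matching with a
nonzero term, each row gets a vertex of depth at most the one it gets here; both sums of depths
are the sum over all vertices, so the two matchings coincide and the determinant is
`±∏ a_e ∏ c_l`.
-/

open SimpleGraph
open scoped Matrix

theorem Equiv.comp_eq_comp_of_forall_le {ι κ M : Type*} [Fintype ι] [Fintype κ]
    [AddCommMonoid M] [PartialOrder M] [IsOrderedCancelAddMonoid M]
    (f g : ι ≃ κ) (D : κ → M) (h : ∀ i, D (g i) ≤ D (f i)) : D ∘ g = D ∘ f := by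
  have hsum : ∑ i, D (g i) = ∑ i, D (f i) := by rw [Equiv.sum_comp g D, Equiv.sum_comp f D]
  funext i
  exact (Finset.sum_eq_sum_iff_of_le fun i _ => h i).mp hsum i (Finset.mem_univ i)

theorem Matrix.exists_det_submatrix_eq_unit_smul_prod {ι κ R : Type*} [Fintype ι]
    [DecidableEq ι] [CommRing R] (M : Matrix ι κ R) (e f : ι ≃ κ)
    (hf : ∀ g : ι ≃ κ, ∏ i, M i (g i) ≠ 0 → g = f) :
    ∃ u : ℤˣ, (M.submatrix id e).det = u • ∏ i, M i (f i) := by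
  have hterm : ∀ σ : Equiv.Perm ι,
      ∏ i, M.submatrix id e (σ i) i = ∏ i, M i ((σ.symm.trans e) i) := fun σ => by
    simpa using Equiv.prod_comp σ fun i => M i (e (σ.symm i))
  refine ⟨Equiv.Perm.sign (f.trans e.symm).symm, ?_⟩
  rw [Matrix.det_apply, Finset.sum_eq_single (f.trans e.symm).symm]
  · rw [hterm]; congr; ext; simp
  · intro σ _ hσ
    by_cases hP : ∏ i, M i ((σ.symm.trans e) i) = 0
    · rw [hterm, hP, smul_zero]
    · refine absurd ?_ hσ
      rw [← hf _ hP]; ext; simp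
  · simp

theorem Sym2.eq_of_mk_eq_of_lt {α β : Type*} [Preorder β] (D : α → β) {a b a' b' : α}
    (h : s(a, b) = s(a', b')) (hb : D b < D a) (hb' : D b' < D a') : a = a' := by
  rcases Sym2.eq_iff.mp h with ⟨h1, -⟩ | ⟨rfl, rfl⟩
  · exact h1
  · exact absurd hb (lt_asymm hb')

theorem SimpleGraph.Reachable.exists_adj_dist_lt {V : Type*} {G : SimpleGraph V} {u v : V}
    (h : G.Reachable u v) (hne : u ≠ v) : ∃ w, G.Adj u w ∧ G.dist w v < G.dist u v := by
  obtain ⟨p, -, hp⟩ := h.exists_path_of_dist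
  obtain ⟨w, hadj, q, rfl⟩ := Walk.exists_eq_cons_of_ne hne p
  refine ⟨w, hadj, ?_⟩
  have := G.dist_le q
  rw [Walk.length_cons] at hp
  omega

theorem SimpleGraph.isAcyclic_of_unique_lower_neighbor {V α : Type*} [LinearOrder α]
    {G : SimpleGraph V} (D : V → α) (hadj : ∀ ⦃u v⦄, G.Adj u v → D u ≠ D v)
    (hlower : ∀ ⦃v w w'⦄, G.Adj v w → G.Adj v w' → D w < D v → D w' < D v → w = w') :
    G.IsAcyclic := by
  classical
  intro v p hp
  obtain ⟨u, hu, hmax⟩ := p.support.toFinset.exists_max_image D ⟨v, by simp⟩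
  rw [List.mem_toFinset] at hu
  set q := p.rotate u hu
  have hq : q.IsCycle := hp.rotate hu
  have hlt : ∀ w ∈ q.support, G.Adj u w → D w < D u := fun w hw hadjw =>
    lt_of_le_of_ne (hmax w (by simpa [q] using hw)) (hadj hadjw).symm
  apply hq.snd_ne_penultimate
  exact hlower (q.adj_snd hq.not_nil) (q.adj_penultimate hq.not_nil).symm
    (hlt _ (q.getVert_mem_support 1) (q.adj_snd hq.not_nil))
    (hlt _ (q.getVert_mem_support _) (q.adj_penultimate hq.not_nil).symm)

namespace LGraph

variable {V E L : Type} (G : LGraph V E L)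

def edge (e : E) : Sym2 V := s((G.ends e).1, (G.ends e).2)

theorem toSG_adj_iff {u v : V} : G.toSG.Adj u v ↔ ∃ e, G.edge e = s(u, v) := by
  simp only [toSG, SimpleGraph.fromRel_adj, edge]
  constructor
  · rintro ⟨-, ⟨e, he⟩ | ⟨e, he⟩⟩
    · exact ⟨e, by rw [he]⟩
    · exact ⟨e, by rw [he, Sym2.eq_swap]⟩
  · rintro ⟨e, he⟩
    have hne := G.ne e
    rcases Sym2.eq_iff.mp he with ⟨h1, h2⟩ | ⟨h1, h2⟩
    · exact ⟨h1 ▸ h2 ▸ hne, Or.inl ⟨e, Prod.ext h1 h2⟩⟩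
    · exact ⟨h2 ▸ h1 ▸ hne.symm, Or.inr ⟨e, Prod.ext h1 h2⟩⟩

theorem adj_ends (e : E) : G.toSG.Adj (G.ends e).1 (G.ends e).2 :=
  G.toSG_adj_iff.mpr ⟨e, rfl⟩

section M101

variable [DecidableEq V]

theorem mem_edge_of_M101_ne_zero {e : E} {v : V} (h : G.M101 (.inl e) v ≠ 0) :
    v ∈ G.edge e := by
  simp only [M101] at h
  split_ifs at h <;> simp_all [edge]

theorem eq_loopAt_of_M101_ne_zero {l : L} {v : V} (h : G.M101 (.inr l) v ≠ 0) :
    v = G.loopAt l := by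
  simp only [M101] at h
  split_ifs at h <;> simp_all

theorem M101_inr_loopAt (l : L) : G.M101 (.inr l) (G.loopAt l) = X (.inr l) := by
  simp [M101]

theorem exists_M101_inl_eq_unit_smul {e : E} {v : V} (h : v ∈ G.edge e) :
    ∃ s : ℤˣ, G.M101 (.inl e) v = s • X (.inl e) := by
  rcases Sym2.mem_iff.mp h with rfl | rfl
  · exact ⟨1, by simp [M101]⟩
  · exact ⟨-1, by simp [M101, (G.ne e).symm]⟩

variable [Fintype V]

theorem M101_mulVec_inl (x : V → MvPolynomial (E ⊕ L) ℝ) (e : E) :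
    (G.M101 *ᵥ x) (.inl e) = X (.inl e) * (x (G.ends e).1 - x (G.ends e).2) := by
  have hsplit : ∀ v, G.M101 (.inl e) v =
      (if v = (G.ends e).1 then X (.inl e) else 0) +
        (if v = (G.ends e).2 then -X (.inl e) else 0) := by
    intro v
    have hne := G.ne e
    simp only [M101]
    split_ifs <;> simp_all
  simp only [Matrix.mulVec, dotProduct, hsplit, add_mul, Finset.sum_add_distrib,
    ite_mul, zero_mul, Finset.sum_ite_eq', Finset.mem_univ, if_true]
  ring

theorem M101_mulVec_inr (x : V → MvPolynomial (E ⊕ L) ℝ) (l : L) :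
    (G.M101 *ᵥ x) (.inr l) = X (.inr l) * x (G.loopAt l) := by
  simp [Matrix.mulVec, dotProduct, M101, ite_mul]

end M101

theorem exists_injective_descent (root : G.toSG.ConnectedComponent → V)
    (hroot : ∀ C, G.toSG.connectedComponentMk (root C) = C) :
    ∃ (D : V → ℕ) (g : V → E ⊕ G.toSG.ConnectedComponent), Function.Injective g ∧
      (∀ C, g (root C) = .inr C) ∧
      ∀ v e, g v = .inl e → ∃ w, G.edge e = s(v, w) ∧ D w < D v := by
  classical
  set comp := G.toSG.connectedComponentMk
  set D : V → ℕ := fun v => G.toSG.dist v (root (comp v))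
  have hparent : ∀ v, v ≠ root (comp v) → ∃ e w, G.edge e = s(v, w) ∧ D w < D v := by
    intro v hv
    have hreach : G.toSG.Reachable v (root (comp v)) :=
      ConnectedComponent.exact (hroot (comp v)).symm
    obtain ⟨w, hvw, hlt⟩ := hreach.exists_adj_dist_lt hv
    obtain ⟨e, he⟩ := G.toSG_adj_iff.mp hvw
    have hcomp : comp w = comp v := (ConnectedComponent.sound hvw.reachable).symm
    exact ⟨e, w, he, by simpa only [D, hcomp] using hlt⟩
  choose parentEdge parent hparentEdge hparent_lt using hparent
  refine ⟨D, fun v => if hv : v = root (comp v) then .inr (comp v) else .inl (parentEdge v hv),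
    fun v v' hvv' => ?_, fun C => by simp [hroot], fun v e hve => ?_⟩
  · dsimp only at hvv'
    by_cases hv : v = root (comp v) <;> by_cases hv' : v' = root (comp v')
    · rw [dif_pos hv, dif_pos hv', Sum.inr.injEq] at hvv'
      rw [hv, hv', hvv']
    · rw [dif_pos hv, dif_neg hv'] at hvv'; cases hvv'
    · rw [dif_neg hv, dif_pos hv'] at hvv'; cases hvv'
    · rw [dif_neg hv, dif_neg hv', Sum.inl.injEq] at hvv'
      refine Sym2.eq_of_mk_eq_of_lt D ?_ (hparent_lt v hv) (hparent_lt v' hv')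
      rw [← hparentEdge, ← hparentEdge, hvv']
  · dsimp only at hve
    by_cases hv : v = root (comp v)
    · rw [dif_pos hv] at hve; cases hve
    · rw [dif_neg hv, Sum.inl.injEq] at hve
      exact ⟨parent v hv, hve ▸ hparentEdge v hv, hparent_lt v hv⟩

def IsDescendingMatching (D : V → ℕ) (f : E ⊕ L ≃ V) : Prop :=
  (∀ l, f (.inr l) = G.loopAt l) ∧
    ∀ e, ∃ w, G.edge e = s(f (.inl e), w) ∧ D w < D (f (.inl e))

theorem exists_isDescendingMatching [Fintype V] [Fintype E] [Fintype L]
    (hmc : Fintype.card E + Fintype.card L = Fintype.card V)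
    (hloop : ∀ C, ∃ l, G.toSG.connectedComponentMk (G.loopAt l) = C) :
    ∃ D f, G.IsDescendingMatching D f ∧
      Function.Bijective fun l => G.toSG.connectedComponentMk (G.loopAt l) := by
  classical
  choose ψ hψ using hloop
  set φ : L → G.toSG.ConnectedComponent := fun l => G.toSG.connectedComponentMk (G.loopAt l)
  have hφ_surj : Function.Surjective φ := Function.RightInverse.surjective hψ
  obtain ⟨D, g, hg, hg_root, hg_edge⟩ :=
    G.exists_injective_descent (fun C => G.loopAt (ψ C)) hψ
  have hcard_V := Fintype.card_le_of_injective g hg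
  have hcard_C := Fintype.card_le_of_surjective φ hφ_surj
  rw [Fintype.card_sum] at hcard_V
  have hφ : Function.Bijective φ :=
    (Fintype.bijective_iff_surjective_and_card φ).mpr ⟨hφ_surj, by omega⟩
  have hg_bij : Function.Bijective g :=
    (Fintype.bijective_iff_injective_and_card g).mpr ⟨hg, by rw [Fintype.card_sum]; omega⟩
  let f : E ⊕ L ≃ V := (Equiv.sumCongr (Equiv.refl E) (Equiv.ofBijective φ hφ)).trans
    (Equiv.ofBijective g hg_bij).symm
  refine ⟨D, f, ⟨fun l => ?_, fun e => hg_edge _ e ?_⟩, hφ⟩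
  · have h := hg_root (φ l)
    rw [hφ.1 (hψ _)] at h
    exact (Equiv.symm_apply_eq (Equiv.ofBijective g hg_bij)).mpr h.symm
  · exact Equiv.ofBijective_apply_symm_apply g hg_bij _

variable {G}

theorem IsLoopedForest.exists_loopAt (hF : G.IsLoopedForest) (C : G.toSG.ConnectedComponent) :
    ∃ l, G.toSG.connectedComponentMk (G.loopAt l) = C := by
  obtain ⟨⟨l, hl⟩⟩ := (Nat.card_eq_one_iff_unique.mp (hF.2.2 C)).2
  exact ⟨l, hl⟩

namespace IsDescendingMatching

variable {D : V → ℕ} {f : E ⊕ L ≃ V}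

theorem edge_injective (hf : G.IsDescendingMatching D f) : Function.Injective G.edge := by
  intro e e' h
  obtain ⟨w, hw, hlt⟩ := hf.2 e
  obtain ⟨w', hw', hlt'⟩ := hf.2 e'
  exact Sum.inl_injective <| f.injective <|
    Sym2.eq_of_mk_eq_of_lt D (hw.symm.trans (h.trans hw')) hlt hlt'

theorem isAcyclic (hf : G.IsDescendingMatching D f) : G.toSG.IsAcyclic := by
  have hlower : ∀ ⦃v w⦄, G.toSG.Adj v w → D w < D v →
      ∃ e, G.edge e = s(v, w) ∧ f (.inl e) = v := fun v w hvw hlt => by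
    obtain ⟨e, he⟩ := G.toSG_adj_iff.mp hvw
    obtain ⟨w', hw', hlt'⟩ := hf.2 e
    exact ⟨e, he, Sym2.eq_of_mk_eq_of_lt D (hw'.symm.trans he) hlt' hlt⟩
  refine isAcyclic_of_unique_lower_neighbor D (fun u v huv => ?_)
    (fun v w w' hw hw' hlt hlt' => ?_)
  · obtain ⟨e, he⟩ := G.toSG_adj_iff.mp huv
    obtain ⟨w, hw, hlt⟩ := hf.2 e
    rcases Sym2.eq_iff.mp (hw.symm.trans he) with ⟨rfl, rfl⟩ | ⟨rfl, rfl⟩ <;> omega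
  · obtain ⟨e, he, hfe⟩ := hlower hw hlt
    obtain ⟨e', he', hfe'⟩ := hlower hw' hlt'
    obtain rfl : e = e' := Sum.inl_injective (f.injective (hfe.trans hfe'.symm))
    exact Sym2.congr_right.mp (he.symm.trans he')

theorem isLoopedForest (hf : G.IsDescendingMatching D f)
    (hloop : Function.Bijective fun l => G.toSG.connectedComponentMk (G.loopAt l)) :
    G.IsLoopedForest := by
  refine ⟨hf.edge_injective, hf.isAcyclic, fun C => Nat.card_eq_one_iff_unique.mpr ⟨?_, ?_⟩⟩
  · exact ⟨fun a b => Subtype.ext (hloop.1 (a.2.trans b.2.symm))⟩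
  · obtain ⟨l, hl⟩ := hloop.2 C
    exact ⟨⟨l, hl⟩⟩

variable [DecidableEq V]

theorem eq_of_prod_M101_ne_zero [Fintype V] [Fintype E] [Fintype L]
    (hf : G.IsDescendingMatching D f) (g : E ⊕ L ≃ V) (hg : ∏ r, G.M101 r (g r) ≠ 0) :
    g = f := by
  have hne : ∀ r, G.M101 r (g r) ≠ 0 := fun r => Finset.prod_ne_zero_iff.mp hg r (by simp)
  have hloop : ∀ l, g (.inr l) = f (.inr l) := fun l =>
    (G.eq_loopAt_of_M101_ne_zero (hne (.inr l))).trans (hf.1 l).symm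
  have hedge : ∀ e, g (.inl e) = f (.inl e) ∨ D (g (.inl e)) < D (f (.inl e)) := fun e => by
    obtain ⟨w, hw, hlt⟩ := hf.2 e
    have hmem := G.mem_edge_of_M101_ne_zero (hne (.inl e))
    rw [hw, Sym2.mem_iff] at hmem
    rcases hmem with h | h <;> rw [h]
    exacts [.inl rfl, .inr hlt]
  have hD := Equiv.comp_eq_comp_of_forall_le f g D <| by
    rintro (e | l)
    · rcases hedge e with h | h
      exacts [(congrArg D h).le, h.le]
    · rw [hloop l]
  ext r
  rcases r with e | l
  · exact (hedge e).resolve_right (congrFun hD (.inl e)).not_lt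
  · exact hloop l

theorem exists_det_M101_submatrix_eq_unit_smul [Fintype V] [Fintype E] [Fintype L]
    [DecidableEq E] [DecidableEq L] (hf : G.IsDescendingMatching D f) (eqv : E ⊕ L ≃ V) :
    ∃ u : ℤˣ, ((M101 G).submatrix id eqv).det = u • ∏ r, X r := by
  obtain ⟨u, hu⟩ := Matrix.exists_det_submatrix_eq_unit_smul_prod _ eqv f
    hf.eq_of_prod_M101_ne_zero
  have hentry : ∀ r, ∃ s : ℤˣ, G.M101 r (f r) = s • X r := by
    rintro (e | l)
    · obtain ⟨w, hw, -⟩ := hf.2 e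
      exact G.exists_M101_inl_eq_unit_smul (hw ▸ Sym2.mem_mk_left _ _)
    · exact ⟨1, by rw [hf.1 l, M101_inr_loopAt, one_smul]⟩
  choose s hs using hentry
  refine ⟨u * ∏ r, s r, ?_⟩
  rw [hu, Finset.prod_congr rfl fun r _ => hs r, Finset.prod_smul, smul_smul]

end IsDescendingMatching

theorem det_M101_submatrix_eq_zero [Fintype V] [Fintype E] [Fintype L] [DecidableEq V]
    [DecidableEq E] [DecidableEq L] (eqv : E ⊕ L ≃ V) (C : G.toSG.ConnectedComponent)
    (hC : ∀ l, G.toSG.connectedComponentMk (G.loopAt l) ≠ C) :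
    ((M101 G).submatrix id eqv).det = 0 := by
  classical
  let x : V → MvPolynomial (E ⊕ L) ℝ :=
    fun v => if G.toSG.connectedComponentMk v = C then 1 else 0
  refine Matrix.exists_mulVec_eq_zero_iff.mp ⟨x ∘ eqv, fun hx => ?_, ?_⟩
  · obtain ⟨v, hv⟩ := C.exists_rep
    have hvC : G.toSG.connectedComponentMk v = C := hv
    simpa [x, hvC] using congrFun hx (eqv.symm v)
  · rw [Matrix.submatrix_mulVec_equiv]
    ext (e | l)
    · simp [M101_mulVec_inl, x, ConnectedComponent.sound (G.adj_ends e).reachable]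
    · simp [M101_mulVec_inr, x, hC l]

end LGraph

/-- **Determinant of the natural looped-forest matrix.**  The square matrix is formed
using an arbitrary bijection `eqv` between the rows (edges and loops) and the columns
(vertices); such a bijection exists since `m + c = n`. -/
theorem det_M101
    {V E L : Type} [Fintype V] [Fintype E] [Fintype L]
    [DecidableEq V] [DecidableEq E] [DecidableEq L]
    (G : LGraph V E L) (hmc : Fintype.card E + Fintype.card L = Fintype.card V)
    (eqv : E ⊕ L ≃ V) :
    (G.IsLoopedForest →
      ((LGraph.M101 G).submatrix id eqv).det =
          (∏ e : E, X (Sum.inl e)) * ∏ l : L, X (Sum.inr l) ∨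
      ((LGraph.M101 G).submatrix id eqv).det =
          -((∏ e : E, X (Sum.inl e)) * ∏ l : L, X (Sum.inr l))) ∧
    (¬ G.IsLoopedForest → ((LGraph.M101 G).submatrix id eqv).det = 0) := by
  by_cases hloop : ∀ C, ∃ l, G.toSG.connectedComponentMk (G.loopAt l) = C
  · obtain ⟨D, f, hf, hφ⟩ := G.exists_isDescendingMatching hmc hloop
    obtain ⟨u, hu⟩ := hf.exists_det_M101_submatrix_eq_unit_smul eqv
    refine ⟨fun _ => ?_, fun hNF => absurd (hf.isLoopedForest hφ) hNF⟩
    rw [hu, Fintype.prod_sum_type]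
    rcases Int.units_eq_one_or u with rfl | rfl
    · exact .inl (one_smul _ _)
    · exact .inr (by rw [Units.neg_smul, one_smul])
  · push Not at hloop
    obtain ⟨C, hC⟩ := hloop
    refine ⟨fun hF => ?_, fun _ => LGraph.det_M101_submatrix_eq_zero eqv C hC⟩
    obtain ⟨l, hl⟩ := hF.exists_loopAt C
    exact absurd hl (hC l)
end

section
/- Let G be a (2,2)-sparse multigraph with n vertices and m edges. Then the set of direction assignments d ∈ (ℝ²)^E for which the coefficient matrix of the realization system P(G,d) has rank m is the complement of the zero set of finitely many nonzero polynomials in the 2m coordinates of d; in particular this set is open and dense in ℝ^{2m}. -/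
/-!
STATEMENT 12: genericity of full rank for direction network realization systems.
Let G be a (2,2)-sparse multigraph with n vertices and m edges.  Then the set of
direction assignments d ∈ (ℝ²)^E for which the coefficient matrix of P(G,d) has rank m
is the complement of the zero set of finitely many nonzero polynomials in the 2m
coordinates of d; in particular this set is open and dense in ℝ^{2m}.
-/

open MvPolynomial

/-- The coefficient matrix of the linear system `P(G,d)` (one row per edge, equation
`⟨p_i − p_j, d_e^⊥⟩ = 0`, i.e. `−d_e.2 (x_i − x_j) + d_e.1 (y_i − y_j) = 0`), the
unknowns being the `2n` coordinates of `p`. -/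
def coeffP {V E : Type} [DecidableEq V] (G : MGraph V E) (d : E → ℝ × ℝ) :
    Matrix E (V ⊕ V) ℝ := fun e col =>
  match col with
  | Sum.inl v =>
      if v = (G.ends e).1 then -(d e).2
      else if v = (G.ends e).2 then (d e).2 else 0
  | Sum.inr v =>
      if v = (G.ends e).1 then (d e).1
      else if v = (G.ends e).2 then -(d e).1 else 0

/-- The `2m` coordinates of a direction assignment `d ∈ (ℝ²)^E`. -/
def dirCoords {E : Type} (d : E → ℝ × ℝ) : E ⊕ E → ℝ :=
  Sum.elim (fun e => (d e).1) (fun e => (d e).2)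

/-!
Full rank of `P(G,d)` means `det (P Pᵀ) ≠ 0`, and `det (P Pᵀ)` is a single polynomial in the
coordinates of `d`. So it suffices to find one `d` with linearly independent rows: the polynomial is
then nonzero, and the set where a nonzero polynomial does not vanish is open and dense.

Such a `d` is built by induction on the number of edges. Sparsity gives a vertex `v` of degree 1, 2
or 3, and only the rows of the edges at `v` are nonzero in the two columns of `v`. If the degree is
at most 2, delete these edges and give them directions with independent normals. If the degree is
3, some two distinct neighbours `a`, `b` lie in no tight set of `G - v`: singletons are tight and
tight sets through a common vertex have tight union, so otherwise one tight set would contain all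
three neighbours, and adding `v` would break sparsity. Hence `G - v + ab` is sparse. If `D` is the
direction of `ab` in an independent realization of it, give `va`, `vb` the direction `D` and the
third edge the direction `D^⊥`; in the columns of `v` their rows are `±D^⊥` and `D`, and the rows of
`va` and `vb` differ by the row of `ab`.
-/

open Finset Matrix

theorem Matrix.rank_eq_card_iff_det_ne_zero {m K : Type*} [Fintype m] [DecidableEq m] [Field K]
    (A : Matrix m m K) : A.rank = Fintype.card m ↔ A.det ≠ 0 := by
  refine ⟨fun h => ?_, rank_of_det_ne_zero⟩
  have hrange : LinearMap.range A.mulVecLin = ⊤ := Submodule.eq_top_of_finrank_eq <| by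
    rw [← rank, h, Module.finrank_fintype_fun_eq_card]
  have hunit : IsUnit A := mulVec_surjective_iff_isUnit.1 (LinearMap.range_eq_top.1 hrange)
  exact ((isUnit_iff_isUnit_det A).1 hunit).ne_zero

theorem Matrix.rank_eq_card_iff_det_mul_transpose_ne_zero {m n K : Type*} [Fintype m]
    [DecidableEq m] [Fintype n] [Field K] [LinearOrder K] [IsStrictOrderedRing K]
    (A : Matrix m n K) : A.rank = Fintype.card m ↔ (A * Aᵀ).det ≠ 0 := by
  rw [← rank_self_mul_transpose, rank_eq_card_iff_det_ne_zero]

theorem MvPolynomial.dense_setOf_eval_ne_zero {σ 𝕜 : Type*} [Fintype σ]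
    [NontriviallyNormedField 𝕜] {f : MvPolynomial σ 𝕜} (hf : f ≠ 0) :
    Dense {x : σ → 𝕜 | eval x f ≠ 0} := by
  refine dense_iff_inter_open.2 fun U hU ⟨x, hx⟩ => ?_
  obtain ⟨ε, hε, hball⟩ := Metric.isOpen_iff.1 hU x hx
  by_contra hempty
  refine hf <| funext_set (fun i => Metric.ball (x i) ε)
    (fun i => infinite_of_mem_nhds _ (Metric.ball_mem_nhds _ hε)) fun y hy => ?_
  rw [← ball_pi x hε] at hy
  by_contra hy0
  exact hempty ⟨y, hball hy, hy0⟩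

theorem linearIndependent_of_map_of_compl {ι R M N : Type*} [Fintype ι] [Ring R]
    [AddCommGroup M] [Module R M] [AddCommGroup N] [Module R N] {f : ι → M} (p : ι → Prop)
    [DecidablePred p] (π : M →ₗ[R] N) (hπ : ∀ i, ¬ p i → π (f i) = 0)
    (hp : LinearIndependent R fun i : {i // p i} => π (f i))
    (hnp : LinearIndependent R fun i : {i // ¬ p i} => f i) : LinearIndependent R f := by
  rw [Fintype.linearIndependent_iff] at hp hnp ⊢
  intro g hg
  have hgp : ∀ i : {i // p i}, g i = 0 := hp (fun i => g i) <| by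
    have := congrArg π hg
    rw [map_sum, map_zero, ← Fintype.sum_subtype_add_sum_subtype p, Fintype.sum_eq_zero
      (fun i : {i // ¬ p i} => π (g i • f i)) fun i => by rw [map_smul, hπ i i.2, smul_zero],
      add_zero] at this
    simpa using this
  have hgnp : ∀ i : {i // ¬ p i}, g i = 0 := hnp (fun i => g i) <| by
    rw [← Fintype.sum_subtype_add_sum_subtype p] at hg
    simpa [hgp] using hg
  intro i
  by_cases h : p i
  exacts [hgp ⟨i, h⟩, hgnp ⟨i, h⟩]

/-- The linear algebra of eliminating a vertex of degree three: `π` reads off the columns of the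
vertex, and merging the rows `f i` and `f j` into `f i + f j` gives the smaller graph. -/
theorem linearIndependent_of_linearIndependent_add {ι R M N : Type*} [Fintype ι] [CommRing R]
    [AddCommGroup M] [Module R M] [AddCommGroup N] [Module R N] {f : ι → M} {p : ι → Prop}
    [DecidablePred p] (π : M →ₗ[R] N) {i j k : ι} (hij : i ≠ j) (hik : i ≠ k) (hjk : j ≠ k)
    (hp : ∀ e, p e ↔ e = i ∨ e = j ∨ e = k) (hπ : ∀ e, ¬ p e → π (f e) = 0)
    (hπi : π (f i) = -π (f j)) (hπjk : LinearIndependent R ![π (f j), π (f k)])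
    (hnew : LinearIndependent R fun o : Option {e // ¬ p e} => o.elim (f i + f j) fun e => f e) :
    LinearIndependent R f := by
  classical
  rw [Fintype.linearIndependent_iff] at hnew ⊢
  intro g hg
  have hsplit : ∑ e, g e • f e =
      g i • f i + g j • f j + g k • f k + ∑ e : {e // ¬ p e}, g e • f e := by
    rw [← Fintype.sum_subtype_add_sum_subtype p, ← sum_subtype {i, j, k} (by simp [hp])
      fun e => g e • f e, sum_insert (by simp [hij, hik]), sum_insert (by simp [hjk]),
      sum_singleton]
    abel
  have hproj : (g j - g i) • π (f j) + g k • π (f k) = 0 := by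
    have hrest : ∑ e : {e // ¬ p e}, g e • π (f e) = 0 :=
      Fintype.sum_eq_zero _ fun e => by rw [hπ e e.2, smul_zero]
    have := congrArg π hg
    rw [hsplit] at this
    simp only [map_add, map_sum, map_smul, hπi, map_zero, hrest, add_zero] at this
    rw [← this]
    module
  obtain ⟨hgij, hgk⟩ := LinearIndependent.pair_iff.1 hπjk _ _ hproj
  have hzero := hnew (fun o => o.elim (g i) fun e => g e) <| by
    rw [Fintype.sum_option, ← hg, hsplit, hgk, ← sub_eq_zero.1 hgij]
    simp only [Option.elim, zero_smul, add_zero]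
    module
  intro e
  by_cases he : p e
  · rcases (hp e).1 he with rfl | rfl | rfl
    · exact hzero none
    · exact (sub_eq_zero.1 hgij).trans (hzero none)
    · exact hgk
  · exact hzero (some ⟨e, he⟩)

theorem Finset.exists_eq_insert_insert_singleton {α : Type*} [DecidableEq α] {s : Finset α}
    (hs : #s = 3) {a b : α} (ha : a ∈ s) (hb : b ∈ s) (hab : a ≠ b) :
    ∃ c, c ≠ a ∧ c ≠ b ∧ s = {a, b, c} := by
  have hb' : b ∈ s.erase a := mem_erase.2 ⟨hab.symm, hb⟩
  obtain ⟨c, hc⟩ := card_eq_one.1 (by rw [card_erase_of_mem hb', card_erase_of_mem ha, hs] :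
    #((s.erase a).erase b) = 1)
  have hcs : c ∈ (s.erase a).erase b := hc ▸ mem_singleton_self c
  refine ⟨c, ne_of_mem_erase (mem_of_mem_erase hcs), ne_of_mem_erase hcs, ?_⟩
  rw [← hc, insert_erase hb', insert_erase ha]

namespace MGraph

variable {V E : Type} (G : MGraph V E)

def Incident (v : V) (e : E) : Prop := (G.ends e).1 = v ∨ (G.ends e).2 = v

instance [DecidableEq V] (v : V) : DecidablePred (G.Incident v) := fun _ => instDecidableOr

def restrict (p : E → Prop) : MGraph V {e // p e} := ⟨fun e => G.ends e, fun e => G.ne e⟩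

/-- `G` minus the edges at `v`; the vertex `v` stays, isolated, so that the vertex type is the
same throughout the induction on the number of edges. -/
abbrev deleteIncident (v : V) : MGraph V {e // ¬ G.Incident v e} := G.restrict (¬ G.Incident v ·)

def addEdge (a b : V) (h : a ≠ b) : MGraph V (Option E) :=
  ⟨fun o => o.elim (a, b) G.ends, by rintro (_ | e); exacts [h, G.ne e]⟩

/-- `e(S) = 2|S| - 2`, written without truncated subtraction. -/
def IsTight (S : Finset V) : Prop := G.edgeCount S + 2 = 2 * #S

lemma IsSparse22.isTight_or_add_three_le {G : MGraph V E} (hs : G.IsSparse22) {S : Finset V}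
    (hS : S.Nonempty) : G.IsTight S ∨ G.edgeCount S + 3 ≤ 2 * #S := by
  have := hs S
  have := hS.card_pos
  unfold IsTight
  omega

variable [DecidableEq V]

def other (v : V) (e : E) : V := if (G.ends e).1 = v then (G.ends e).2 else (G.ends e).1

lemma other_ne (v : V) (e : E) : G.other v e ≠ v := by
  unfold other
  split_ifs with h
  · exact fun h' => G.ne e (h.trans h'.symm)
  · exact h

variable [Fintype E]

lemma edgeCount_eq_card (S : Finset V) :
    G.edgeCount S = #{e | (G.ends e).1 ∈ S ∧ (G.ends e).2 ∈ S} := by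
  rw [edgeCount, Nat.card_eq_fintype_card, Fintype.card_subtype]

lemma edgeCount_restrict (p : E → Prop) [DecidablePred p] (S : Finset V) :
    (G.restrict p).edgeCount S = #{e | p e ∧ (G.ends e).1 ∈ S ∧ (G.ends e).2 ∈ S} := by
  refine (Nat.card_congr (Equiv.subtypeSubtypeEquivSubtypeInter p
    fun e => (G.ends e).1 ∈ S ∧ (G.ends e).2 ∈ S)).trans ?_
  rw [Nat.card_eq_fintype_card, Fintype.card_subtype]

lemma edgeCount_addEdge (a b : V) (h : a ≠ b) (S : Finset V) :
    (G.addEdge a b h).edgeCount S = G.edgeCount S + if a ∈ S ∧ b ∈ S then 1 else 0 := by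
  simp only [edgeCount_eq_card, card_filter, Fintype.sum_option]
  rw [add_comm]
  rfl

lemma edgeCount_mono {S T : Finset V} (h : S ⊆ T) : G.edgeCount S ≤ G.edgeCount T := by
  simp only [edgeCount_eq_card]
  exact card_le_card (monotone_filter_right _ fun _ _ => And.imp (@h _) (@h _))

lemma edgeCount_add_edgeCount_le (A B : Finset V) :
    G.edgeCount A + G.edgeCount B ≤ G.edgeCount (A ∪ B) + G.edgeCount (A ∩ B) := by
  classical
  simp only [edgeCount_eq_card]
  rw [← card_union_add_card_inter]
  gcongr
  · intro e; simp only [mem_union, mem_filter, mem_univ, true_and]; tauto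
  · rw [← filter_and]; intro e; simp only [mem_filter, mem_univ, true_and, mem_inter]; tauto

lemma edgeCount_singleton (a : V) : G.edgeCount {a} = 0 := by
  rw [edgeCount_eq_card, card_eq_zero, filter_eq_empty_iff]
  rintro e - ⟨h₁, h₂⟩
  exact G.ne e ((mem_singleton.1 h₁).trans (mem_singleton.1 h₂).symm)

lemma edgeCount_eq_edgeCount_deleteIncident_add {v : V} {T : Finset V} (hv : v ∈ T) :
    G.edgeCount T = (G.deleteIncident v).edgeCount T
      + #{e | G.Incident v e ∧ G.other v e ∈ T} := by
  rw [edgeCount_restrict, edgeCount_eq_card, ← card_filter_add_card_filter_not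
    (G.Incident v), filter_filter, filter_filter, add_comm]
  congr 2 <;> ext e <;> simp only [mem_filter, mem_univ, true_and]
  · tauto
  · by_cases h₁ : (G.ends e).1 = v
    · simp [other, Incident, h₁, hv]
    · by_cases h₂ : (G.ends e).2 = v <;> simp [other, Incident, h₁, h₂, hv]

lemma sum_card_incident [Fintype V] : ∑ v, #{e | G.Incident v e} = 2 * Fintype.card E := by
  classical
  refine (sum_card_bipartiteAbove_eq_sum_card_bipartiteBelow G.Incident).trans ?_
  rw [mul_comm, ← smul_eq_mul, ← card_univ, ← sum_const]
  refine sum_congr rfl fun e _ => ?_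
  rw [← card_pair (G.ne e)]
  congr 1
  ext v
  simp [bipartiteBelow, Incident, eq_comm]

lemma isTight_singleton (a : V) : G.IsTight {a} := by
  simp [IsTight, edgeCount_singleton]

variable {G}

lemma IsSparse22.restrict (hs : G.IsSparse22) (p : E → Prop) : (G.restrict p).IsSparse22 := by
  classical
  intro S
  refine le_trans ?_ (hs S)
  rw [edgeCount_restrict, edgeCount_eq_card]
  exact card_le_card (monotone_filter_right _ fun _ _ => And.right)

lemma IsSparse22.addEdge (hs : G.IsSparse22) {a b : V} (h : a ≠ b)
    (hab : ∀ S : Finset V, a ∈ S → b ∈ S → G.edgeCount S + 3 ≤ 2 * #S) :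
    (G.addEdge a b h).IsSparse22 := by
  intro S
  rw [edgeCount_addEdge]
  split_ifs with hS
  · have := hab S hS.1 hS.2
    omega
  · simpa using hs S

lemma IsSparse22.isTight_union (hs : G.IsSparse22) {A B : Finset V} (hA : G.IsTight A)
    (hB : G.IsTight B) (hAB : (A ∩ B).Nonempty) : G.IsTight (A ∪ B) := by
  have := G.edgeCount_add_edgeCount_le A B
  have := hs (A ∪ B)
  have := hs (A ∩ B)
  have := hAB.card_pos
  have := card_union_add_card_inter A B
  have := card_le_card (subset_union_left (s₁ := A) (s₂ := B))
  unfold IsTight at *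
  omega

lemma IsSparse22.exists_incident_pos_le_three [Fintype V] [Nonempty E] (hs : G.IsSparse22) :
    ∃ v, 0 < #{e | G.Incident v e} ∧ #{e | G.Incident v e} ≤ 3 := by
  by_contra! hdeg
  set S : Finset V := {v | #{e | G.Incident v e} ≠ 0}
  have hinc : ∀ e, (G.ends e).1 ∈ S ∧ (G.ends e).2 ∈ S := fun e => by
    simp only [S, mem_filter, mem_univ, true_and, ← pos_iff_ne_zero, card_pos]
    exact ⟨⟨e, mem_filter.2 ⟨mem_univ _, Or.inl rfl⟩⟩,
      ⟨e, mem_filter.2 ⟨mem_univ _, Or.inr rfl⟩⟩⟩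
  have hcount : G.edgeCount S = Fintype.card E := by
    rw [edgeCount_eq_card, filter_true_of_mem fun e _ => hinc e, card_univ]
  have hsum : ∑ v ∈ S, #{e | G.Incident v e} = 2 * Fintype.card E := by
    rw [sum_filter_ne_zero, sum_card_incident]
  have hfour : #S * 4 ≤ ∑ v ∈ S, #{e | G.Incident v e} := by
    simpa using card_nsmul_le_sum S (fun v => #{e | G.Incident v e}) 4
      fun v hv => hdeg v (pos_iff_ne_zero.2 (mem_filter.1 hv).2)
  have hS : 0 < #S := card_pos.2 ⟨_, (hinc (Classical.arbitrary E)).1⟩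
  have := hs S
  omega

variable {v : V}

lemma IsSparse22.not_isTight_of_forall_other_mem (hs : G.IsSparse22)
    (hdeg : #{e | G.Incident v e} = 3) {S : Finset V}
    (hS : ∀ e, G.Incident v e → G.other v e ∈ S) :
    ¬ (G.deleteIncident v).IsTight S := by
  intro htight
  have hsplit := G.edgeCount_eq_edgeCount_deleteIncident_add (mem_insert_self v S)
  have hall : #{e | G.Incident v e ∧ G.other v e ∈ insert v S} = 3 := by
    rw [← hdeg]
    exact congrArg card <| filter_congr fun e _ =>
      and_iff_left_of_imp fun he => mem_insert_of_mem (hS e he)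
  have := (G.deleteIncident v).edgeCount_mono (subset_insert v S)
  have := hs (insert v S)
  have := card_insert_le v S
  unfold IsTight at htight
  omega

lemma IsSparse22.exists_slack_pair (hs : G.IsSparse22) (hdeg : #{e | G.Incident v e} = 3) :
    ∃ i j, G.Incident v i ∧ G.Incident v j ∧ G.other v i ≠ G.other v j ∧
      ∀ S : Finset V, G.other v i ∈ S → G.other v j ∈ S →
        (G.deleteIncident v).edgeCount S + 3 ≤ 2 * #S := by
  set I : Finset E := {e | G.Incident v e}
  have hs' := hs.restrict (¬ G.Incident v ·)
  obtain ⟨i, hi⟩ : I.Nonempty := card_pos.1 (by omega)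
  by_contra! h
  have htight : ∀ e ∈ I, ∃ S, G.other v i ∈ S ∧ G.other v e ∈ S ∧
      (G.deleteIncident v).IsTight S := by
    intro e he
    by_cases heq : G.other v i = G.other v e
    · exact ⟨{G.other v i}, mem_singleton_self _, heq ▸ mem_singleton_self _,
        isTight_singleton _ _⟩
    · obtain ⟨S, hiS, heS, hS⟩ := h i e (mem_filter.1 hi).2 (mem_filter.1 he).2 heq
      exact ⟨S, hiS, heS, (hs'.isTight_or_add_three_le ⟨_, hiS⟩).resolve_right hS.not_ge⟩
  choose! S hiS heS hS using htight
  have hU : G.other v i ∈ I.sup' ⟨i, hi⟩ S ∧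
      (G.deleteIncident v).IsTight (I.sup' ⟨i, hi⟩ S) :=
    sup'_induction (p := fun A => G.other v i ∈ A ∧ (G.deleteIncident v).IsTight A) _ _
      (fun A hA B hB => ⟨mem_union_left _ hA.1,
        hs'.isTight_union hA.2 hB.2 ⟨_, mem_inter.2 ⟨hA.1, hB.1⟩⟩⟩)
      fun e he => ⟨hiS e he, hS e he⟩
  refine hs.not_isTight_of_forall_other_mem hdeg (fun e he => ?_) hU.2
  have he : e ∈ I := mem_filter.2 ⟨mem_univ _, he⟩
  exact le_sup' S he (heS e he)

end MGraph

namespace DirectionNetwork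

variable {V R : Type} [DecidableEq V] [CommRing R]

def perp (D : R × R) : R × R := (-D.2, D.1)

lemma perp_neg (D : R × R) : perp (-D) = -perp D := rfl

lemma perp_perp (D : R × R) : perp (perp D) = -D := rfl

def edgeRow (u w : V) (D : R × R) : V ⊕ V → R :=
  Sum.elim ((perp D).1 • (Pi.single u 1 - Pi.single w 1))
    ((perp D).2 • (Pi.single u 1 - Pi.single w 1))

lemma edgeRow_swap (u w : V) (D : R × R) : edgeRow w u D = edgeRow u w (-D) := by
  ext (x | x) <;> simp only [edgeRow, perp, Sum.elim_inl, Sum.elim_inr, Pi.smul_apply,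
    Pi.sub_apply, smul_eq_mul, Prod.fst_neg, Prod.snd_neg, neg_neg] <;> ring

lemma edgeRow_sub_edgeRow (v a b : V) (D : R × R) :
    edgeRow v a D - edgeRow v b D = edgeRow b a D := by
  ext (x | x) <;> simp only [edgeRow, Sum.elim_inl, Sum.elim_inr, Pi.sub_apply, Pi.smul_apply,
    smul_eq_mul] <;> ring

lemma edgeRow_neg (u w : V) (D : R × R) : edgeRow u w (-D) = -edgeRow u w D := by
  ext (x | x) <;> simp [edgeRow, perp]

lemma edgeRow_zero (u w : V) : edgeRow u w (0 : R × R) = 0 := by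
  ext (x | x) <;> simp [edgeRow, perp]

lemma map_edgeRow {S : Type} [CommRing S] (φ : R →+* S) (u w : V) (D : R × R) :
    φ ∘ edgeRow u w D = edgeRow u w (φ D.1, φ D.2) := by
  ext (x | x) <;> simp [edgeRow, perp, Pi.single_apply, apply_ite φ]

lemma coeffP_apply {E : Type} (G : MGraph V E) (d : E → ℝ × ℝ) (e : E) :
    coeffP G d e = edgeRow (G.ends e).1 (G.ends e).2 (d e) := by
  have := G.ne e
  ext (x | x) <;> simp only [coeffP, edgeRow, perp, Sum.elim_inl, Sum.elim_inr, Pi.smul_apply,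
    Pi.sub_apply, Pi.single_apply, smul_eq_mul] <;> split_ifs <;> simp_all

def vertexProj (v : V) : (V ⊕ V → R) →ₗ[R] R × R :=
  (LinearMap.proj (Sum.inl v)).prod (LinearMap.proj (Sum.inr v))

lemma vertexProj_edgeRow_left {v w : V} (h : w ≠ v) (D : R × R) :
    vertexProj v (edgeRow v w D) = perp D := by
  simp [vertexProj, edgeRow, h]

lemma vertexProj_edgeRow_of_ne {v u w : V} (hu : u ≠ v) (hw : w ≠ v) (D : R × R) :
    vertexProj v (edgeRow u w D) = 0 := by
  simp [vertexProj, edgeRow, hu.symm, hw.symm]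

lemma linearIndependent_perp_self {D : ℝ × ℝ} (hD : D ≠ 0) :
    LinearIndependent ℝ ![perp D, D] := by
  refine LinearIndependent.pair_iff.2 fun s t h => ?_
  have hD' : D.1 * D.1 + D.2 * D.2 ≠ 0 := fun h0 =>
    hD <| Prod.ext_iff.2 (mul_self_add_mul_self_eq_zero.1 h0)
  have h₁ : -s * D.2 + t * D.1 = 0 := by simpa [perp] using congrArg Prod.fst h
  have h₂ : s * D.1 + t * D.2 = 0 := by simpa [perp] using congrArg Prod.snd h
  refine ⟨(mul_eq_zero.1 ?_).resolve_right hD', (mul_eq_zero.1 ?_).resolve_right hD'⟩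
  · linear_combination D.1 * h₂ - D.2 * h₁
  · linear_combination D.1 * h₁ + D.2 * h₂

end DirectionNetwork

namespace MGraph

open DirectionNetwork

section Realization

variable {V E : Type} [DecidableEq V] (G : MGraph V E)

lemma exists_coeffP_eq_edgeRow_other (v : V) (c : E → ℝ × ℝ) :
    ∃ d : E → ℝ × ℝ,
      (∀ e, G.Incident v e → coeffP G d e = edgeRow v (G.other v e) (c e)) ∧
      ∀ e, ¬ G.Incident v e → d e = c e := by
  refine ⟨fun e => if (G.ends e).2 = v then -c e else c e, fun e he => ?_,
    fun e he => if_neg fun h => he (Or.inr h)⟩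
  rw [coeffP_apply]
  by_cases h₁ : (G.ends e).1 = v
  · have h₂ : (G.ends e).2 ≠ v := fun h₂ => G.ne e (h₁.trans h₂.symm)
    simp [other, h₁, h₂]
  · have h₂ : (G.ends e).2 = v := he.resolve_left h₁
    simp only [other, h₁, h₂, if_true, if_false]
    rw [edgeRow_swap, neg_neg]

lemma vertexProj_coeffP_of_not_incident {v : V} {e : E} (d : E → ℝ × ℝ)
    (he : ¬ G.Incident v e) : vertexProj v (coeffP G d e) = 0 := by
  rw [coeffP_apply]
  exact vertexProj_edgeRow_of_ne (fun h => he (Or.inl h)) (fun h => he (Or.inr h)) _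

variable [Fintype E] {G}

theorem exists_linearIndependent_of_card_incident_le_two {v : V}
    (hdeg : #{e | G.Incident v e} ≤ 2) {d' : {e // ¬ G.Incident v e} → ℝ × ℝ}
    (hd' : LinearIndependent ℝ (coeffP (G.deleteIncident v) d')) :
    ∃ d, LinearIndependent ℝ (coeffP G d) := by
  obtain ⟨emb⟩ : Nonempty ({e // G.Incident v e} ↪ Fin 2) :=
    Function.Embedding.nonempty_of_card_le (by simpa [Fintype.card_subtype] using hdeg)
  let b := Module.Basis.finTwoProd ℝ
  obtain ⟨d, hinc, hrest⟩ := exists_coeffP_eq_edgeRow_other G v fun e =>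
    if h : G.Incident v e then -perp (b (emb ⟨e, h⟩)) else d' ⟨e, h⟩
  refine ⟨d, linearIndependent_of_map_of_compl (G.Incident v) (vertexProj v)
    (fun e he => vertexProj_coeffP_of_not_incident G d he) ?_ ?_⟩
  · have hrows : (fun e : {e // G.Incident v e} => vertexProj v (coeffP G d e)) = b ∘ emb :=
      funext fun e => by
        rw [hinc e e.2, vertexProj_edgeRow_left (G.other_ne v e), dif_pos e.2, perp_neg,
          perp_perp, neg_neg, Function.comp_apply]
    rw [hrows]
    exact b.linearIndependent.comp emb emb.injective
  · have hrows : (fun e : {e // ¬ G.Incident v e} => coeffP G d e) =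
        coeffP (G.deleteIncident v) d' :=
      funext fun e => by rw [coeffP_apply, coeffP_apply, hrest e e.2, dif_neg e.2]; rfl
    rw [hrows]
    exact hd'

theorem exists_linearIndependent_of_card_incident_eq_three {v : V}
    (hdeg : #{e | G.Incident v e} = 3) {i j : E} (hi : G.Incident v i) (hj : G.Incident v j)
    (hab : G.other v i ≠ G.other v j) {d' : Option {e // ¬ G.Incident v e} → ℝ × ℝ}
    (hd' : LinearIndependent ℝ (coeffP ((G.deleteIncident v).addEdge _ _ hab) d')) :
    ∃ d, LinearIndependent ℝ (coeffP G d) := by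
  classical
  have hij : i ≠ j := fun h => hab (congrArg (G.other v) h)
  obtain ⟨k, hki, hkj, hI⟩ := exists_eq_insert_insert_singleton hdeg (by simpa using hi)
    (by simpa using hj) hij
  have hmem : ∀ e, G.Incident v e ↔ e = i ∨ e = j ∨ e = k := fun e => by
    simpa using congrArg (e ∈ ·) hI
  have hk : G.Incident v k := (hmem k).2 (Or.inr (Or.inr rfl))
  set D := d' none
  have hD : D ≠ 0 := fun h => hd'.ne_zero none <| by
    rw [coeffP_apply, show d' none = 0 from h, edgeRow_zero]
  obtain ⟨d, hinc, hrest⟩ := exists_coeffP_eq_edgeRow_other G v fun e =>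
    if h : G.Incident v e then (if e = i then -D else if e = j then D else -perp D)
    else d' (some ⟨e, h⟩)
  have hri : coeffP G d i = -edgeRow v (G.other v i) D := by
    rw [hinc i hi, dif_pos hi, if_pos rfl, edgeRow_neg]
  have hrj : coeffP G d j = edgeRow v (G.other v j) D := by
    rw [hinc j hj, dif_pos hj, if_neg hij.symm, if_pos rfl]
  have hrk : coeffP G d k = edgeRow v (G.other v k) (-perp D) := by
    rw [hinc k hk, dif_pos hk, if_neg hki, if_neg hkj]
  refine ⟨d, linearIndependent_of_linearIndependent_add (vertexProj v) hij hki.symm hkj.symm hmem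
    (fun e he => vertexProj_coeffP_of_not_incident G d he) ?_ ?_ ?_⟩
  · simp only [hri, hrj, map_neg, vertexProj_edgeRow_left (G.other_ne v _)]
  · simpa only [hrj, hrk, vertexProj_edgeRow_left (G.other_ne v _), perp_neg, perp_perp,
      neg_neg] using linearIndependent_perp_self hD
  · have hrows : (fun o : Option {e // ¬ G.Incident v e} =>
        o.elim (coeffP G d i + coeffP G d j) fun e => coeffP G d e) =
        coeffP ((G.deleteIncident v).addEdge _ _ hab) d' := by
      funext o
      rcases o with _ | e
      · rw [Option.elim_none, hri, hrj, neg_add_eq_sub, edgeRow_sub_edgeRow, coeffP_apply]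
        rfl
      · rw [Option.elim_some, coeffP_apply, coeffP_apply, hrest e e.2, dif_neg e.2]
        rfl
    rwa [hrows]

theorem IsSparse22.exists_linearIndependent_coeffP [Fintype V] (hs : G.IsSparse22) :
    ∃ d, LinearIndependent ℝ (coeffP G d) := by
  induction hE : Fintype.card E using Nat.strong_induction_on generalizing E with
  | _ n ih =>
  cases isEmpty_or_nonempty E
  · exact ⟨0, linearIndependent_empty_type⟩
  obtain ⟨v, hpos, hle⟩ := hs.exists_incident_pos_le_three
  have hcard : Fintype.card {e // ¬ G.Incident v e} + #{e | G.Incident v e} = n := by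
    rw [← hE, Fintype.card_subtype_compl, Fintype.card_subtype]
    have := card_le_univ ({e | G.Incident v e} : Finset E)
    omega
  obtain hdeg | hdeg : #{e | G.Incident v e} ≤ 2 ∨ #{e | G.Incident v e} = 3 := by omega
  · obtain ⟨d', hd'⟩ :=
      ih (Fintype.card {e // ¬ G.Incident v e}) (by omega) (hs.restrict _) rfl
    exact exists_linearIndependent_of_card_incident_le_two hdeg hd'
  · obtain ⟨i, j, hi, hj, hab, hslack⟩ := hs.exists_slack_pair hdeg
    obtain ⟨d', hd'⟩ := ih (Fintype.card (Option {e // ¬ G.Incident v e}))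
      (by rw [Fintype.card_option]; omega) ((hs.restrict _).addEdge hab hslack) rfl
    exact exists_linearIndependent_of_card_incident_eq_three hdeg hi hj hab hd'

end Realization

section Polynomial

variable {V E : Type} [DecidableEq V] (G : MGraph V E)

noncomputable def coeffPoly : Matrix E (V ⊕ V) (MvPolynomial (E ⊕ E) ℝ) :=
  Matrix.of fun e => edgeRow (G.ends e).1 (G.ends e).2 (X (Sum.inl e), X (Sum.inr e))

lemma map_eval_coeffPoly (d : E → ℝ × ℝ) :
    (coeffPoly G).map (eval (dirCoords d)) = coeffP G d := by
  funext e
  have hd : d e = (eval (dirCoords d) (X (Sum.inl e)), eval (dirCoords d) (X (Sum.inr e))) := by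
    simp [dirCoords]
  rw [coeffP_apply, hd]
  exact map_edgeRow (eval (dirCoords d)) _ _ _

noncomputable def gramDet [Fintype V] [Fintype E] [DecidableEq E] : MvPolynomial (E ⊕ E) ℝ :=
  (coeffPoly G * (coeffPoly G)ᵀ).det

lemma rank_coeffP_eq_card_iff [Fintype V] [Fintype E] [DecidableEq E] (d : E → ℝ × ℝ) :
    (coeffP G d).rank = Fintype.card E ↔ eval (dirCoords d) G.gramDet ≠ 0 := by
  rw [gramDet, RingHom.map_det, RingHom.mapMatrix_apply, Matrix.map_mul, Matrix.transpose_map,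
    map_eval_coeffPoly, rank_eq_card_iff_det_mul_transpose_ne_zero]

end Polynomial

end MGraph

def dirCoordsHomeomorph (E : Type) : (E → ℝ × ℝ) ≃ₜ (E ⊕ E → ℝ) where
  toFun := dirCoords
  invFun x e := (x (Sum.inl e), x (Sum.inr e))
  left_inv _ := rfl
  right_inv x := by ext (e | e) <;> rfl
  continuous_toFun := continuous_pi <| by
    rintro (e | e)
    exacts [(continuous_apply e).fst, (continuous_apply e).snd]
  continuous_invFun := by fun_prop

/-- **Genericity of full rank for the realization system of a `(2,2)`-sparse graph.**
The full-rank locus is the complement of the common zero set of finitely many nonzero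
polynomials, and it is open and dense. -/
theorem fullRank_locus_is_generic
    {V E : Type} [Fintype V] [Fintype E] [DecidableEq V]
    (G : MGraph V E) (hsparse : G.IsSparse22) :
    ∃ polys : Finset (MvPolynomial (E ⊕ E) ℝ),
      (∀ f ∈ polys, f ≠ 0) ∧
      {d : E → ℝ × ℝ | (coeffP G d).rank = Fintype.card E} =
        {d : E → ℝ × ℝ | ∃ f ∈ polys, eval (dirCoords d) f ≠ 0} ∧
      IsOpen {d : E → ℝ × ℝ | (coeffP G d).rank = Fintype.card E} ∧
      Dense {d : E → ℝ × ℝ | (coeffP G d).rank = Fintype.card E} := by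
  classical
  have hlocus : {d : E → ℝ × ℝ | (coeffP G d).rank = Fintype.card E} =
      {d | eval (dirCoords d) G.gramDet ≠ 0} := Set.ext G.rank_coeffP_eq_card_iff
  obtain ⟨d₀, hd₀⟩ := hsparse.exists_linearIndependent_coeffP
  have hgram : G.gramDet ≠ 0 := fun h =>
    (G.rank_coeffP_eq_card_iff d₀).1 hd₀.rank_matrix (by rw [h, map_zero])
  refine ⟨{G.gramDet}, by simpa using hgram, by simp [hlocus], ?_, ?_⟩ <;> rw [hlocus]
  · exact isOpen_ne_fun ((continuous_eval _).comp (dirCoordsHomeomorph E).continuous)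
      continuous_const
  · exact (dense_setOf_eval_ne_zero hgram).preimage (dirCoordsHomeomorph E).isOpenMap
end
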